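/- arXiv:2205.01258 — 13 statements merged into one kernel-verified Lean document; each statement's English description precedes it below -/
import Mathlib

section
/- Let X be a finite nonempty set with a metric d, and let K_d := { δ : X → ℝ | δ_x ≥ 0 for all x, Σ_x δ_x = 1, and δ_x ≤ exp(d x x') · δ_{x'} for all x, x' ∈ X }. Then for every finite nonempty Y and every d-private channel M : X → Y → ℝ there exist a finite nonempty set Z, a d-private channel V : X → Z → ℝ such that every column of V has positive sum and every normalized column of V (the column divided by its sum) is an extreme point of the convex set K_d, and a channel P : Z → Y → ℝ such that M x y = Σ_{z∈Z} V x z · P z y for all x, y. (Every d-private mechanism is a refinement of a vertex mechanism of the privacy type.) -/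
open Finset

/-- A channel from `X` to `Y`: nonnegative entries and each row sums to 1. -/
def IsChannel {X Y : Type} [Fintype Y] (M : X → Y → ℝ) : Prop :=
  (∀ x y, 0 ≤ M x y) ∧ ∀ x, ∑ y, M x y = 1

/-- The `d`-privacy constraints on a channel. -/
def IsPrivate {X Y : Type} (d : X → X → ℝ) (M : X → Y → ℝ) : Prop :=
  ∀ x x' y, M x y ≤ Real.exp (d x x') * M x' y

/-- `d` is a metric on `X`. -/
def IsMetric {X : Type} (d : X → X → ℝ) : Prop :=
  (∀ x, d x x = 0) ∧ (∀ x x' : X, x ≠ x' → 0 < d x x') ∧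
    (∀ x x', d x x' = d x' x) ∧ ∀ x y z, d x z ≤ d x y + d y z

/-- The convex set of `d`-private distributions on `X`. -/
def Kd {X : Type} [Fintype X] (d : X → X → ℝ) : Set (X → ℝ) :=
  {δ | (∀ x, 0 ≤ δ x) ∧ (∑ x, δ x = 1) ∧
        ∀ x x', δ x ≤ Real.exp (d x x') * δ x'}

/-!
`Kd d` is cut out by finitely many linear inequalities (positivity, the privacy inequalities and
`∑ δ = 1` written as two inequalities), and no nonzero direction satisfies all their homogeneous
versions, so it is a bounded polyhedron. Such a polyhedron is the convex hull of its extreme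
points: by induction on the number of slack constraints, a non-extreme point `u` lies in an open
segment `(y, z)` inside the polyhedron, every constraint tight at `u` stays tight along `z - y`,
and moving from `u` in the directions `±(z - y)` until a new constraint becomes tight writes `u`
as a convex combination of two points with fewer slack constraints.

Each nonzero column of `M`, normalized, lies in `Kd d`, hence the column is a positive combination
of extreme points. Splitting every column of `M` into these pieces gives `V`, and `P` sends each
piece back to the column it came from.
-/

section Polyhedron

variable {E ι : Type*} [AddCommGroup E] [Module ℝ E]

def polyhedron (φ : ι → E →ₗ[ℝ] ℝ) (β : ι → ℝ) : Set E := {u | ∀ i, φ i u ≤ β i}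

noncomputable def slack [Fintype ι] (φ : ι → E →ₗ[ℝ] ℝ) (β : ι → ℝ) (u : E) : Finset ι :=
  {i | φ i u < β i}

variable {φ : ι → E →ₗ[ℝ] ℝ} {β : ι → ℝ}

lemma apply_eq_of_mem_openSegment_of_apply_eq {u y z : E} (hy : y ∈ polyhedron φ β)
    (hz : z ∈ polyhedron φ β) (hu : u ∈ openSegment ℝ y z) {i : ι} (hi : φ i u = β i) :
    φ i y = β i ∧ φ i z = β i := by
  obtain ⟨a, b, ha, hb, hab, rfl⟩ := hu
  have hyi := hy i
  have hzi := hz i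
  simp only [map_add, map_smul, smul_eq_mul] at hi
  have hsum : a * (β i - φ i y) + b * (β i - φ i z) = 0 := by linear_combination β i * hab - hi
  obtain ⟨hay, hbz⟩ := (add_eq_zero_iff_of_nonneg (mul_nonneg ha.le (sub_nonneg.2 hyi))
    (mul_nonneg hb.le (sub_nonneg.2 hzi))).1 hsum
  constructor
  · linarith [(mul_eq_zero.1 hay).resolve_left ha.ne']
  · linarith [(mul_eq_zero.1 hbz).resolve_left hb.ne']

lemma exists_add_smul_mem_polyhedron_slack_ssubset [Fintype ι] {u v : E}
    (hu : u ∈ polyhedron φ β) (htight : ∀ i, φ i u = β i → φ i v = 0) (hv : ∃ i, 0 < φ i v) :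
    ∃ t : ℝ, 0 < t ∧ u + t • v ∈ polyhedron φ β ∧ slack φ β (u + t • v) ⊂ slack φ β u := by
  -- ratio test: the step is the largest one along `v` that keeps every constraint
  let ratio i := (β i - φ i u) / φ i v
  obtain ⟨i₀, hi₀, hmin⟩ := ({i | 0 < φ i v} : Finset ι).exists_min_image ratio
    (by simpa [Finset.Nonempty] using hv)
  simp only [mem_filter, mem_univ, true_and] at hi₀ hmin
  have hslack₀ : φ i₀ u < β i₀ :=
    (hu i₀).lt_of_ne fun h => hi₀.ne' (htight i₀ h)
  have hstep : ∀ i, φ i (u + ratio i₀ • v) = φ i u + ratio i₀ * φ i v := by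
    simp
  refine ⟨ratio i₀, div_pos (sub_pos.2 hslack₀) hi₀, fun i => ?_, ?_⟩
  · rw [hstep]
    rcases le_or_gt (φ i v) 0 with h | h
    · nlinarith [hu i, div_pos (sub_pos.2 hslack₀) hi₀]
    · have := (le_div_iff₀ h).1 (hmin i h)
      linarith
  · refine (ssubset_iff_of_subset fun i => ?_).2 ⟨i₀, by simpa [slack] using hslack₀, ?_⟩
    · simp only [slack, mem_filter, mem_univ, true_and, hstep]
      intro h
      refine (hu i).lt_of_ne fun hi => ?_
      rw [htight i hi, hi] at h
      simp at h
    · simp [slack, hstep, ratio, div_mul_cancel₀ _ hi₀.ne']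

theorem polyhedron_subset_convexHull_extremePoints [Fintype ι]
    (hφ : ∀ v, (∀ i, φ i v ≤ 0) → v = 0) :
    polyhedron φ β ⊆ convexHull ℝ ((polyhedron φ β).extremePoints ℝ) := by
  intro u hu
  induction hn : #(slack φ β u) using Nat.strong_induction_on generalizing u with
  | _ n ih =>
  by_cases hext : u ∈ (polyhedron φ β).extremePoints ℝ
  · exact subset_convexHull ℝ _ hext
  obtain ⟨y, hy, z, hz, hseg, hne⟩ :
      ∃ y ∈ polyhedron φ β, ∃ z ∈ polyhedron φ β, u ∈ openSegment ℝ y z ∧ y ≠ u := by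
    simpa [mem_extremePoints_iff_left, hu] using hext
  have hv : z - y ≠ 0 := by
    rintro hzy
    rw [sub_eq_zero.1 hzy, openSegment_same] at hseg
    exact hne hseg.symm
  have htight : ∀ i, φ i u = β i → φ i (z - y) = 0 := fun i hi => by
    obtain ⟨hyi, hzi⟩ := apply_eq_of_mem_openSegment_of_apply_eq hy hz hseg hi
    simp [hyi, hzi]
  have hpos : ∀ w ≠ 0, ∃ i, 0 < φ i w := fun w hw => by
    by_contra! h
    exact hw (hφ w h)
  obtain ⟨t, ht, htP, htslack⟩ :=
    exists_add_smul_mem_polyhedron_slack_ssubset hu htight (hpos _ hv)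
  obtain ⟨s, hs, hsP, hsslack⟩ := exists_add_smul_mem_polyhedron_slack_ssubset hu
    (fun i hi => by rw [map_neg, htight i hi, neg_zero]) (hpos _ (neg_ne_zero.2 hv))
  have hp := ih _ (hn ▸ card_lt_card htslack) htP rfl
  have hq := ih _ (hn ▸ card_lt_card hsslack) hsP rfl
  refine (convex_convexHull ℝ _).segment_subset hq hp
    ⟨t / (s + t), s / (s + t), by positivity, by positivity, by field_simp; ring, ?_⟩
  match_scalars <;> field_simp <;> ring

end Polyhedron

section Kd

variable {X : Type} [Fintype X]

noncomputable def kdConstraint (d : X → X → ℝ) : X ⊕ (X × X) ⊕ Bool → (X → ℝ) →ₗ[ℝ] ℝ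
  | .inl x => -LinearMap.proj x
  | .inr (.inl (x, x')) => LinearMap.proj x - Real.exp (d x x') • LinearMap.proj x'
  | .inr (.inr true) => ∑ x, LinearMap.proj x
  | .inr (.inr false) => -∑ x, LinearMap.proj x

def kdBound : X ⊕ (X × X) ⊕ Bool → ℝ
  | .inr (.inr true) => 1
  | .inr (.inr false) => -1
  | _ => 0

lemma Kd_eq_polyhedron (d : X → X → ℝ) : Kd d = polyhedron (kdConstraint d) kdBound := by
  ext δ
  simp [Kd, polyhedron, Sum.forall, Bool.forall_bool, kdConstraint, kdBound, le_antisymm_iff,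
    and_comm, and_assoc]

lemma eq_zero_of_forall_kdConstraint_nonpos {d : X → X → ℝ} {v : X → ℝ}
    (hv : ∀ i, kdConstraint d i v ≤ 0) : v = 0 := by
  have hnonneg : ∀ x, 0 ≤ v x := fun x => by simpa [kdConstraint] using hv (.inl x)
  have hsum : ∑ x, v x ≤ 0 := by simpa [kdConstraint] using hv (.inr (.inr true))
  funext x
  exact (sum_eq_zero_iff_of_nonneg fun x _ => hnonneg x).1
    (le_antisymm hsum (sum_nonneg fun x _ => hnonneg x)) x (mem_univ x)

theorem Kd_subset_convexHull_extremePoints (d : X → X → ℝ) :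
    Kd d ⊆ convexHull ℝ ((Kd d).extremePoints ℝ) := by
  rw [Kd_eq_polyhedron]
  exact polyhedron_subset_convexHull_extremePoints fun _ => eq_zero_of_forall_kdConstraint_nonpos

end Kd

lemma exists_pos_sum_smul_eq_of_mem_convexHull {E : Type*} [AddCommGroup E] [Module ℝ E]
    {s : Set E} {x : E} (hx : x ∈ convexHull ℝ s) :
    ∃ (ι : Type) (_ : Fintype ι) (w : ι → ℝ) (z : ι → E),
      (∀ i, 0 < w i) ∧ (∀ i, z i ∈ s) ∧ ∑ i, w i • z i = x := by
  classical
  obtain ⟨ι, _, w, z, hw₀, -, hz, rfl⟩ := mem_convexHull_iff_exists_fintype.1 hx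
  refine ⟨{i // w i ≠ 0}, inferInstance, fun i => w i, fun i => z i,
    fun i => (hw₀ i).lt_of_ne' i.2, fun i => hz i, ?_⟩
  rw [← sum_subtype {i | w i ≠ 0} (by simp) fun i => w i • z i]
  exact sum_filter_of_ne fun i _ h hw => h (by simp [hw])

lemma exists_pos_sum_smul_extremePoints_Kd {X : Type} [Fintype X] {d : X → X → ℝ}
    {c : X → ℝ} (hc : ∀ x, 0 ≤ c x) (hcd : ∀ x x', c x ≤ Real.exp (d x x') * c x') :
    ∃ (ι : Type) (_ : Fintype ι) (w : ι → ℝ) (e : ι → X → ℝ),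
      (∀ i, 0 < w i) ∧ (∀ i, e i ∈ (Kd d).extremePoints ℝ) ∧ ∑ i, w i • e i = c := by
  rcases (sum_nonneg fun x _ => hc x).eq_or_lt with hzero | hpos
  · refine ⟨Empty, inferInstance, Empty.elim, Empty.elim, nofun, nofun, funext fun x => ?_⟩
    simpa using ((sum_eq_zero_iff_of_nonneg fun x _ => hc x).1 hzero.symm x (mem_univ x)).symm
  set s := ∑ x, c x
  have hδ : s⁻¹ • c ∈ Kd d := by
    refine ⟨fun x => by simpa using mul_nonneg (inv_nonneg.2 hpos.le) (hc x), ?_, fun x x' => ?_⟩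
    · simpa [← mul_sum] using inv_mul_cancel₀ hpos.ne'
    · simpa [mul_left_comm] using mul_le_mul_of_nonneg_left (hcd x x') (inv_nonneg.2 hpos.le)
  obtain ⟨ι, _, w, e, hw, he, hsum⟩ :=
    exists_pos_sum_smul_eq_of_mem_convexHull (Kd_subset_convexHull_extremePoints d hδ)
  refine ⟨ι, inferInstance, fun i => s * w i, e, fun i => mul_pos hpos (hw i), he, ?_⟩
  simp_rw [mul_smul, ← smul_sum, hsum, smul_inv_smul₀ hpos.ne']

lemma IsChannel.nonempty {X Y : Type} [Nonempty X] [Fintype Y] {M : X → Y → ℝ}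
    (hM : IsChannel M) : Nonempty Y := by
  by_contra hY
  rw [not_nonempty_iff] at hY
  simpa using hM.2 (Classical.arbitrary X)

def IsVertexMechanism {X Z : Type} [Fintype X] [Fintype Z] (d : X → X → ℝ)
    (V : X → Z → ℝ) : Prop :=
  IsChannel V ∧ IsPrivate d V ∧ (∀ z, 0 < ∑ x, V x z) ∧
    ∀ z, (fun x => V x z / ∑ x', V x' z) ∈ (Kd d).extremePoints ℝ

lemma IsVertexMechanism.comp_equiv {X Z Z' : Type} [Fintype X] [Fintype Z] [Fintype Z']
    {d : X → X → ℝ} {V : X → Z → ℝ} (hV : IsVertexMechanism d V) (e : Z' ≃ Z) :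
    IsVertexMechanism d fun x z' => V x (e z') := by
  obtain ⟨⟨hV₀, hV₁⟩, hVd, hVpos, hVext⟩ := hV
  exact ⟨⟨fun x z' => hV₀ x (e z'), fun x => (e.sum_comp (V x)).trans (hV₁ x)⟩,
    fun x x' z' => hVd x x' (e z'), fun z' => hVpos (e z'), fun z' => hVext (e z')⟩

theorem exists_isVertexMechanism_factorization {X Y : Type} [Fintype X] [Fintype Y]
    {d : X → X → ℝ} {M : X → Y → ℝ} (hM : IsChannel M) (hMd : IsPrivate d M) :
    ∃ (Z : Type) (_ : Fintype Z) (V : X → Z → ℝ) (P : Z → Y → ℝ),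
      IsVertexMechanism d V ∧ IsChannel P ∧ ∀ x y, M x y = ∑ z, V x z * P z y := by
  classical
  choose ι _ w e hw he hsum using fun y =>
    exists_pos_sum_smul_extremePoints_Kd (d := d) (fun x => hM.1 x y) (fun x x' => hMd x x' y)
  have hcol : ∀ x y, ∑ i, w y i * e y i x = M x y := fun x y => by
    simpa using congrFun (hsum y) x
  have heK : ∀ y i, e y i ∈ Kd d := fun y i => (he y i).1
  have hVcol : ∀ y i, ∑ x, w y i * e y i x = w y i := fun y i => by
    rw [← mul_sum, (heK y i).2.1, mul_one]
  refine ⟨Σ y, ι y, inferInstance, fun x p => w p.1 p.2 * e p.1 p.2 x,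
    fun p y => if p.1 = y then 1 else 0, ⟨⟨?_, ?_⟩, ?_, ?_, ?_⟩, ?_, ?_⟩
  · exact fun x p => mul_nonneg (hw _ _).le ((heK _ _).1 x)
  · intro x
    simp_rw [Fintype.sum_sigma, hcol]
    exact hM.2 x
  · intro x x' p
    simpa [mul_left_comm] using mul_le_mul_of_nonneg_left ((heK _ _).2.2 x x') (hw _ _).le
  · exact fun p => (hVcol _ _).symm ▸ hw _ _
  · intro p
    simp_rw [hVcol, mul_div_cancel_left₀ _ (hw _ _).ne']
    exact he _ _
  · exact ⟨fun p y => by positivity, fun p => by simp⟩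
  · intro x y
    simp [Fintype.sum_sigma, hcol]

theorem refinement_of_vertex_mechanism_general
    {X Y : Type} [Fintype X] [Fintype Y] [Nonempty X]
    (d : X → X → ℝ)
    (M : X → Y → ℝ) (hM : IsChannel M) (hMp : IsPrivate d M) :
    ∃ (m : ℕ) (_ : 0 < m) (V : X → Fin m → ℝ) (P : Fin m → Y → ℝ),
      IsChannel V ∧ IsPrivate d V ∧
      (∀ z, 0 < ∑ x, V x z) ∧
      (∀ z, (fun x => V x z / ∑ x', V x' z) ∈ Set.extremePoints ℝ (Kd d)) ∧
      IsChannel P ∧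
      ∀ x y, M x y = ∑ z, V x z * P z y := by
  obtain ⟨Z, _, V, P, hV, ⟨hP₀, hP₁⟩, hMVP⟩ := exists_isVertexMechanism_factorization hM hMp
  have : Nonempty Z := hV.1.nonempty
  let e := (Fintype.equivFin Z).symm
  obtain ⟨hVe, hVed, hVepos, hVeext⟩ := hV.comp_equiv e
  refine ⟨Fintype.card Z, Fintype.card_pos, fun x j => V x (e j), fun j => P (e j),
    hVe, hVed, hVepos, hVeext, ⟨fun j => hP₀ (e j), fun j => hP₁ (e j)⟩, fun x y => ?_⟩
  exact (hMVP x y).trans (e.sum_comp fun z => V x z * P z y).symm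

/-- Every `d`-private mechanism is a refinement of a vertex mechanism of the
privacy type: a `d`-private channel whose normalized columns are extreme
points of `Kd`. -/
theorem refinement_of_vertex_mechanism
    {X Y : Type} [Fintype X] [Fintype Y] [Nonempty X] [Nonempty Y]
    (d : X → X → ℝ) (hd : IsMetric d)
    (M : X → Y → ℝ) (hM : IsChannel M) (hMp : IsPrivate d M) :
    ∃ (m : ℕ) (_ : 0 < m) (V : X → Fin m → ℝ) (P : Fin m → Y → ℝ),
      IsChannel V ∧ IsPrivate d V ∧
      (∀ z, 0 < ∑ x, V x z) ∧
      (∀ z, (fun x => V x z / ∑ x', V x' z) ∈ Set.extremePoints ℝ (Kd d)) ∧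
      IsChannel P ∧
      ∀ x y, M x y = ∑ z, V x z * P z y :=
  refinement_of_vertex_mechanism_general d M hM hMp
end

section
/- Let X be a finite nonempty set with a metric d, let W be a finite nonempty action set and ℓ : W → X → ℝ a loss function. Let M : X → Y → ℝ and M' : X → Y' → ℝ be d-private channels (Y, Y' finite nonempty) such that M' is a refinement of M, i.e. there is a channel P : Y → Y' → ℝ with M' x y' = Σ_{y∈Y} M x y · P y y' for all x, y'. If M' is universally ℓ-optimal within the d-privacy type, then M is universally ℓ-optimal within the d-privacy type. -/
open Finset

/-- A prior on `X`. -/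
def IsPrior {X : Type} [Fintype X] (π : X → ℝ) : Prop :=
  (∀ x, 0 ≤ π x) ∧ ∑ x, π x = 1

/-- Posterior expected loss `U_ℓ[π⟩M]`. -/
noncomputable def postLoss {X Y W : Type} [Fintype X] [Fintype Y] [Fintype W] [Nonempty W]
    (π : X → ℝ) (M : X → Y → ℝ) (ℓ : W → X → ℝ) : ℝ :=
  ∑ y, Finset.univ.inf' Finset.univ_nonempty fun w => ∑ x, π x * M x y * ℓ w x

/-- Universal `ℓ`-optimality within the `d`-privacy type. -/
def UnivOptimal {X W Y : Type} [Fintype X] [Fintype W] [Nonempty W] [Fintype Y]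
    (d : X → X → ℝ) (M : X → Y → ℝ) (ℓ : W → X → ℝ) : Prop :=
  ∀ (Y'' : Type) [Fintype Y''] [Nonempty Y''] (N : X → Y'' → ℝ),
    IsChannel N → IsPrivate d N →
      ∀ π : X → ℝ, IsPrior π → postLoss π M ℓ ≤ postLoss π N ℓ

/-- If `M'` refines `M` and `M'` is universally `ℓ`-optimal, then so is `M`. -/
theorem univOptimal_of_refines
    {X Y Y' W : Type} [Fintype X] [Nonempty X] [Fintype Y] [Nonempty Y]
    [Fintype Y'] [Nonempty Y'] [Fintype W] [Nonempty W]
    (d : X → X → ℝ) (hd : IsMetric d) (ℓ : W → X → ℝ)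
    (M : X → Y → ℝ) (hM : IsChannel M) (hMp : IsPrivate d M)
    (M' : X → Y' → ℝ) (hM' : IsChannel M') (hM'p : IsPrivate d M')
    (P : Y → Y' → ℝ) (hP : IsChannel P)
    (href : ∀ x y', M' x y' = ∑ y, M x y * P y y')
    (hopt : UnivOptimal d M' ℓ) :
    UnivOptimal d M ℓ := by
  intro Y'' _ _ N hN hNp π hπ
  have key : postLoss π M ℓ ≤ postLoss π M' ℓ := by
    unfold postLoss
    set f : Y → W → ℝ := fun y w => ∑ x, π x * M x y * ℓ w x with hf
    have h1 : ∀ (y' : Y') (w : W), ∑ x, π x * M' x y' * ℓ w x = ∑ y, P y y' * f y w := by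
      intro y' w
      calc ∑ x, π x * M' x y' * ℓ w x
          = ∑ x, ∑ y, P y y' * (π x * M x y * ℓ w x) := by
            apply Finset.sum_congr rfl; intro x _
            rw [href, Finset.mul_sum, Finset.sum_mul]
            exact Finset.sum_congr rfl fun y _ => by ring
        _ = ∑ y, ∑ x, P y y' * (π x * M x y * ℓ w x) := Finset.sum_comm
        _ = ∑ y, P y y' * f y w := by
            exact Finset.sum_congr rfl fun y _ => (Finset.mul_sum _ _ _).symm
    calc ∑ y, Finset.univ.inf' Finset.univ_nonempty (f y)
        = ∑ y' : Y', ∑ y, P y y' * Finset.univ.inf' Finset.univ_nonempty (f y) := by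
          rw [Finset.sum_comm]
          apply Finset.sum_congr rfl; intro y _
          rw [← Finset.sum_mul, hP.2 y, one_mul]
      _ ≤ ∑ y' : Y', Finset.univ.inf' Finset.univ_nonempty
            (fun w => ∑ x, π x * M' x y' * ℓ w x) := by
          apply Finset.sum_le_sum; intro y' _
          apply Finset.le_inf'; intro w _
          rw [h1 y' w]
          apply Finset.sum_le_sum; intro y _
          exact mul_le_mul_of_nonneg_left
            (Finset.inf'_le _ (Finset.mem_univ w)) (hP.1 y y')
  exact key.trans (hopt Y'' N hN hNp π hπ)
end

section
/- Let X be a finite nonempty set with a metric d, let W be a finite nonempty action set and ℓ : W → X → ℝ a loss function. Let M : X → Y → ℝ and M' : X → Y' → ℝ be d-private channels and let 0 < p < 1. Define the external probabilistic choice M ⊕_p M' : X → (Y ⊎ Y') → ℝ by (M ⊕_p M') x (inl y) = p · M x y and (M ⊕_p M') x (inr y') = (1−p) · M' x y'. Then M ⊕_p M' is a d-private channel, and M ⊕_p M' is universally ℓ-optimal within the d-privacy type if and only if both M and M' are universally ℓ-optimal within the d-privacy type. -/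
/-
Both components of `M ⊕_p M'` are seen by the adversary separately, so its posterior loss is
`p · U[π⟩M] + (1-p) · U[π⟩M']`. If `M` and `M'` are optimal, this is at most
`p · U[π⟩N] + (1-p) · U[π⟩N] = U[π⟩N]`. Conversely, comparing `M ⊕_p M'` with `N ⊕_p M'`
(resp. `M ⊕_p N`), which is again a private channel, cancels the common term and leaves
`p · U[π⟩M] ≤ p · U[π⟩N]`.
-/

open Finset

/-- The external probabilistic choice `M ⊕_p M'`. -/
def pChoice {X Y Y' : Type} (p : ℝ) (M : X → Y → ℝ) (M' : X → Y' → ℝ) :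
    X → Y ⊕ Y' → ℝ :=
  fun x => Sum.elim (fun y => p * M x y) (fun y' => (1 - p) * M' x y')

lemma pChoice_isChannel {X Y Y' : Type} [Fintype Y] [Fintype Y']
    {M : X → Y → ℝ} {M' : X → Y' → ℝ} (hM : IsChannel M) (hM' : IsChannel M')
    {p : ℝ} (hp0 : 0 ≤ p) (hp1 : p ≤ 1) : IsChannel (pChoice p M M') := by
  constructor
  · rintro x (y | y')
    · exact mul_nonneg hp0 (hM.1 x y)
    · exact mul_nonneg (sub_nonneg.2 hp1) (hM'.1 x y')
  · intro x
    simp only [pChoice, Fintype.sum_sum_type, Sum.elim_inl, Sum.elim_inr,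
      ← Finset.mul_sum, hM.2 x, hM'.2 x]
    ring

lemma pChoice_isPrivate {X Y Y' : Type} {d : X → X → ℝ}
    {M : X → Y → ℝ} {M' : X → Y' → ℝ} (hMp : IsPrivate d M) (hM'p : IsPrivate d M')
    {p : ℝ} (hp0 : 0 ≤ p) (hp1 : p ≤ 1) : IsPrivate d (pChoice p M M') := by
  rintro x x' (y | y')
  · calc p * M x y ≤ p * (Real.exp (d x x') * M x' y) :=
          mul_le_mul_of_nonneg_left (hMp x x' y) hp0
      _ = Real.exp (d x x') * (p * M x' y) := by ring
  · calc (1 - p) * M' x y' ≤ (1 - p) * (Real.exp (d x x') * M' x' y') :=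
          mul_le_mul_of_nonneg_left (hM'p x x' y') (sub_nonneg.2 hp1)
      _ = Real.exp (d x x') * ((1 - p) * M' x' y') := by ring

section PostLoss

variable {X Y Y' W : Type} [Fintype X] [Fintype Y] [Fintype Y'] [Fintype W] [Nonempty W]

lemma postLoss_sumElim (π : X → ℝ) (M : X → Y → ℝ) (M' : X → Y' → ℝ) (ℓ : W → X → ℝ) :
    postLoss π (fun x => Sum.elim (M x) (M' x)) ℓ = postLoss π M ℓ + postLoss π M' ℓ :=
  Fintype.sum_sum_type _

lemma postLoss_const_mul (π : X → ℝ) (M : X → Y → ℝ) (ℓ : W → X → ℝ) {c : ℝ} (hc : 0 ≤ c) :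
    postLoss π (fun x y => c * M x y) ℓ = c * postLoss π M ℓ := by
  rw [postLoss, postLoss, Finset.mul_sum]
  refine Finset.sum_congr rfl fun y _ => ?_
  rw [Finset.apply_inf'_eq_inf'_comp _ (c * ·) (fun a b => mul_min_of_nonneg a b hc)]
  congr 1
  ext w
  simp only [Function.comp, Finset.mul_sum]
  exact Finset.sum_congr rfl fun x _ => by ring

lemma postLoss_pChoice (π : X → ℝ) (M : X → Y → ℝ) (M' : X → Y' → ℝ) (ℓ : W → X → ℝ)
    {p : ℝ} (hp0 : 0 ≤ p) (hp1 : p ≤ 1) :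
    postLoss π (pChoice p M M') ℓ = p * postLoss π M ℓ + (1 - p) * postLoss π M' ℓ := by
  rw [← postLoss_const_mul π M ℓ hp0, ← postLoss_const_mul π M' ℓ (sub_nonneg.2 hp1),
    ← postLoss_sumElim]
  rfl

end PostLoss

section UnivOptimal

variable {X Y Y' W : Type} [Fintype X] [Fintype Y] [Fintype Y'] [Fintype W] [Nonempty W]
  {d : X → X → ℝ} {ℓ : W → X → ℝ} {M : X → Y → ℝ} {M' : X → Y' → ℝ} {p : ℝ}

lemma univOptimal_pChoice (h : UnivOptimal d M ℓ) (h' : UnivOptimal d M' ℓ)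
    (hp0 : 0 ≤ p) (hp1 : p ≤ 1) : UnivOptimal d (pChoice p M M') ℓ := by
  intro Y'' _ _ N hN hNp π hπ
  calc postLoss π (pChoice p M M') ℓ = p * postLoss π M ℓ + (1 - p) * postLoss π M' ℓ :=
        postLoss_pChoice π M M' ℓ hp0 hp1
    _ ≤ p * postLoss π N ℓ + (1 - p) * postLoss π N ℓ :=
        add_le_add (mul_le_mul_of_nonneg_left (h Y'' N hN hNp π hπ) hp0)
          (mul_le_mul_of_nonneg_left (h' Y'' N hN hNp π hπ) (sub_nonneg.2 hp1))
    _ = postLoss π N ℓ := by ring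

lemma univOptimal_of_pChoice_left (h : UnivOptimal d (pChoice p M M') ℓ)
    (hM' : IsChannel M') (hM'p : IsPrivate d M') (hp0 : 0 < p) (hp1 : p ≤ 1) :
    UnivOptimal d M ℓ := by
  intro Y'' _ _ N hN hNp π hπ
  have key := h (Y'' ⊕ Y') (pChoice p N M') (pChoice_isChannel hN hM' hp0.le hp1)
    (pChoice_isPrivate hNp hM'p hp0.le hp1) π hπ
  rw [postLoss_pChoice π M M' ℓ hp0.le hp1, postLoss_pChoice π N M' ℓ hp0.le hp1] at key
  exact le_of_mul_le_mul_left (by linarith) hp0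

lemma univOptimal_of_pChoice_right (h : UnivOptimal d (pChoice p M M') ℓ)
    (hM : IsChannel M) (hMp : IsPrivate d M) (hp0 : 0 ≤ p) (hp1 : p < 1) :
    UnivOptimal d M' ℓ := by
  intro Y'' _ _ N hN hNp π hπ
  have key := h (Y ⊕ Y'') (pChoice p M N) (pChoice_isChannel hM hN hp0 hp1.le)
    (pChoice_isPrivate hMp hNp hp0 hp1.le) π hπ
  rw [postLoss_pChoice π M M' ℓ hp0 hp1.le, postLoss_pChoice π M N ℓ hp0 hp1.le] at key
  exact le_of_mul_le_mul_left (by linarith) (sub_pos.2 hp1)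

end UnivOptimal

theorem pChoice_channel_private_and_optimal_iff_general
    {X Y Y' W : Type} [Fintype X] [Fintype Y]
    [Fintype Y'] [Fintype W] [Nonempty W]
    (d : X → X → ℝ) (ℓ : W → X → ℝ)
    (M : X → Y → ℝ) (hM : IsChannel M) (hMp : IsPrivate d M)
    (M' : X → Y' → ℝ) (hM' : IsChannel M') (hM'p : IsPrivate d M')
    (p : ℝ) (hp0 : 0 < p) (hp1 : p < 1) :
    IsChannel (pChoice p M M') ∧ IsPrivate d (pChoice p M M') ∧
      (UnivOptimal d (pChoice p M M') ℓ ↔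
        UnivOptimal d M ℓ ∧ UnivOptimal d M' ℓ) :=
  ⟨pChoice_isChannel hM hM' hp0.le hp1.le, pChoice_isPrivate hMp hM'p hp0.le hp1.le,
    fun h => ⟨univOptimal_of_pChoice_left h hM' hM'p hp0 hp1.le,
      univOptimal_of_pChoice_right h hM hMp hp0.le hp1⟩,
    fun ⟨h, h'⟩ => univOptimal_pChoice h h' hp0.le hp1.le⟩

/-- `M ⊕_p M'` is a `d`-private channel, and it is universally `ℓ`-optimal
iff both `M` and `M'` are. -/
theorem pChoice_channel_private_and_optimal_iff
    {X Y Y' W : Type} [Fintype X] [Nonempty X] [Fintype Y] [Nonempty Y]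
    [Fintype Y'] [Nonempty Y'] [Fintype W] [Nonempty W]
    (d : X → X → ℝ) (hd : IsMetric d) (ℓ : W → X → ℝ)
    (M : X → Y → ℝ) (hM : IsChannel M) (hMp : IsPrivate d M)
    (M' : X → Y' → ℝ) (hM' : IsChannel M') (hM'p : IsPrivate d M')
    (p : ℝ) (hp0 : 0 < p) (hp1 : p < 1) :
    IsChannel (pChoice p M M') ∧ IsPrivate d (pChoice p M M') ∧
      (UnivOptimal d (pChoice p M M') ℓ ↔
        UnivOptimal d M ℓ ∧ UnivOptimal d M' ℓ) :=
  pChoice_channel_private_and_optimal_iff_general d ℓ M hM hMp M' hM' hM'p p hp0 hp1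
end

section
/- Let X = {x₁, x₂} be a two-element set with a metric d, and set c := d x₁ x₂ > 0 and k := 1/(1 + exp c). Define the channel T : X → Fin 2 → ℝ by T x₁ 0 = k·exp c, T x₁ 1 = k, T x₂ 0 = k, T x₂ 1 = k·exp c. Then T is d-private, and T is universally optimal within the d-privacy type: for every finite nonempty action set W, every loss function ℓ : W → X → ℝ, every prior π on X, every finite nonempty set Y, and every d-private channel M' : X → Y → ℝ, one has U_ℓ[π⟩T] ≤ U_ℓ[π⟩M']. -/
open Finset

lemma mul_inf'_aux {W : Type} [Fintype W] [Nonempty W] (k : ℝ) (hk : 0 ≤ k) (f : W → ℝ) :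
    Finset.univ.inf' Finset.univ_nonempty (fun w => k * f w)
      = k * Finset.univ.inf' Finset.univ_nonempty f := by
  obtain ⟨w, hw, hweq⟩ := Finset.exists_mem_eq_inf' Finset.univ_nonempty f
  apply le_antisymm
  · calc Finset.univ.inf' Finset.univ_nonempty (fun w => k * f w) ≤ k * f w :=
          Finset.inf'_le _ (Finset.mem_univ w)
      _ = k * Finset.univ.inf' Finset.univ_nonempty f := by rw [← hweq]
  · exact Finset.le_inf' _ _ fun b _ =>
      mul_le_mul_of_nonneg_left (Finset.inf'_le _ (Finset.mem_univ b)) hk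

/-- The binary mechanism `T` on a two-element set `X = {x₁, x₂}`:
`T` is `d`-private and universally optimal within the `d`-privacy type,
for every loss function and every prior. -/
theorem binary_mechanism_universally_optimal
    {X : Type} [Fintype X] [DecidableEq X]
    (x₁ x₂ : X) (hne : x₁ ≠ x₂) (hX : ∀ x, x = x₁ ∨ x = x₂)
    (d : X → X → ℝ) (hd : IsMetric d)
    (c k : ℝ) (hc : c = d x₁ x₂) (hcpos : 0 < c)
    (hk : k = 1 / (1 + Real.exp c))
    (T : X → Fin 2 → ℝ)
    (hT1 : T x₁ 0 = k * Real.exp c) (hT2 : T x₁ 1 = k)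
    (hT3 : T x₂ 0 = k) (hT4 : T x₂ 1 = k * Real.exp c) :
    IsChannel T ∧ IsPrivate d T ∧
      ∀ (W : Type) [Fintype W] [Nonempty W] (ℓ : W → X → ℝ)
        (π : X → ℝ), IsPrior π →
        ∀ (Y : Type) [Fintype Y] [Nonempty Y] (M' : X → Y → ℝ),
          IsChannel M' → IsPrivate d M' →
            postLoss π T ℓ ≤ postLoss π M' ℓ := by
  have hE0 : (0:ℝ) < Real.exp c := Real.exp_pos c
  have hE1 : (1:ℝ) < Real.exp c := by
    calc (1:ℝ) = Real.exp 0 := by simp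
      _ < Real.exp c := Real.exp_lt_exp.2 hcpos
  set E := Real.exp c with hEdef
  have hkpos : 0 < k := by rw [hk]; positivity
  have hk1 : k * (1 + E) = 1 := by
    rw [hk]; field_simp
  have hsumX : ∀ f : X → ℝ, ∑ x, f x = f x₁ + f x₂ := by
    intro f
    have huniv : (Finset.univ : Finset X) = {x₁, x₂} := by
      ext x
      simp only [Finset.mem_univ, Finset.mem_insert, Finset.mem_singleton, true_iff]
      exact hX x
    rw [huniv, Finset.sum_pair hne]
  have hd11 : d x₁ x₁ = 0 := hd.1 x₁
  have hd22 : d x₂ x₂ = 0 := hd.1 x₂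
  have hd12 : d x₁ x₂ = c := hc.symm
  have hd21 : d x₂ x₁ = c := by rw [hd.2.2.1]; exact hc.symm
  refine ⟨⟨?_, ?_⟩, ?_, ?_⟩
  · intro x y
    rcases hX x with rfl | rfl <;> fin_cases y <;>
      simp only [Fin.mk_zero, Fin.mk_one, hT1, hT2, hT3, hT4] <;> positivity
  · intro x
    rcases hX x with rfl | rfl <;>
      rw [Fin.sum_univ_two] <;>
      simp only [Fin.mk_zero, Fin.mk_one, hT1, hT2, hT3, hT4] <;> nlinarith [hk1]
  · intro x x' y
    rcases hX x with rfl | rfl <;> rcases hX x' with rfl | rfl <;> fin_cases y <;>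
      simp only [Fin.mk_zero, Fin.mk_one, hT1, hT2, hT3, hT4, hd11, hd22, hd12, hd21, Real.exp_zero, one_mul] <;>
      nlinarith [hE1, hkpos]
  · intro W _ _ ℓ π hπ Y _ _ M' hM' hpriv
    obtain ⟨hMnn, hMsum⟩ := hM'
    have hD : (0:ℝ) < E^2 - 1 := by nlinarith
    set α : Y → ℝ := fun y => (E * M' x₁ y - M' x₂ y) / (E^2 - 1) with hαdef
    set β : Y → ℝ := fun y => (E * M' x₂ y - M' x₁ y) / (E^2 - 1) with hβdef
    have hα : ∀ y, 0 ≤ α y := by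
      intro y
      apply div_nonneg _ hD.le
      have := hpriv x₂ x₁ y
      rw [hd21] at this
      linarith
    have hβ : ∀ y, 0 ≤ β y := by
      intro y
      apply div_nonneg _ hD.le
      have := hpriv x₁ x₂ y
      rw [hd12] at this
      linarith
    have hpy : ∀ y, M' x₁ y = α y * E + β y := by
      intro y; rw [hαdef, hβdef]; field_simp; ring
    have hqy : ∀ y, M' x₂ y = α y + β y * E := by
      intro y; rw [hαdef, hβdef]; field_simp; ring
    have hαsum : ∑ y, α y = k := by
      rw [hαdef]
      rw [← Finset.sum_div]
      rw [show ∑ y, (E * M' x₁ y - M' x₂ y) = E * (∑ y, M' x₁ y) - ∑ y, M' x₂ y by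
        rw [Finset.mul_sum, ← Finset.sum_sub_distrib]]
      rw [hMsum x₁, hMsum x₂, hk]
      rw [div_eq_div_iff hD.ne' (by positivity)]
      ring
    have hβsum : ∑ y, β y = k := by
      rw [hβdef]
      rw [← Finset.sum_div]
      rw [show ∑ y, (E * M' x₂ y - M' x₁ y) = E * (∑ y, M' x₂ y) - ∑ y, M' x₁ y by
        rw [Finset.mul_sum, ← Finset.sum_sub_distrib]]
      rw [hMsum x₂, hMsum x₁, hk]
      rw [div_eq_div_iff hD.ne' (by positivity)]
      ring
    set A : W → ℝ := fun w => π x₁ * E * ℓ w x₁ + π x₂ * ℓ w x₂ with hAdef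
    set B : W → ℝ := fun w => π x₁ * ℓ w x₁ + π x₂ * E * ℓ w x₂ with hBdef
    set iA : ℝ := Finset.univ.inf' Finset.univ_nonempty A with hiA
    set iB : ℝ := Finset.univ.inf' Finset.univ_nonempty B with hiB
    have hTloss : postLoss π T ℓ = k * iA + k * iB := by
      rw [postLoss, Fin.sum_univ_two]
      have h0 : (fun w => ∑ x, π x * T x 0 * ℓ w x) = fun w => k * A w := by
        funext w
        rw [hsumX, hT1, hT3, hAdef]
        ring
      have h1 : (fun w => ∑ x, π x * T x 1 * ℓ w x) = fun w => k * B w := by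
        funext w
        rw [hsumX, hT2, hT4, hBdef]
        ring
      rw [h0, h1, mul_inf'_aux k hkpos.le A, mul_inf'_aux k hkpos.le B]
    rw [hTloss, postLoss]
    have hterm : ∀ y : Y, α y * iA + β y * iB ≤
        Finset.univ.inf' Finset.univ_nonempty fun w => ∑ x, π x * M' x y * ℓ w x := by
      intro y
      apply Finset.le_inf'
      intro w _
      rw [hsumX, hpy y, hqy y]
      have h1 : α y * iA ≤ α y * A w :=
        mul_le_mul_of_nonneg_left (Finset.inf'_le _ (Finset.mem_univ w)) (hα y)
      have h2 : β y * iB ≤ β y * B w :=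
        mul_le_mul_of_nonneg_left (Finset.inf'_le _ (Finset.mem_univ w)) (hβ y)
      calc α y * iA + β y * iB ≤ α y * A w + β y * B w := add_le_add h1 h2
        _ = π x₁ * (α y * E + β y) * ℓ w x₁ + π x₂ * (α y + β y * E) * ℓ w x₂ := by
            rw [hAdef, hBdef]; ring
    calc k * iA + k * iB = ∑ y, (α y * iA + β y * iB) := by
          rw [Finset.sum_add_distrib, ← Finset.sum_mul, ← Finset.sum_mul, hαsum, hβsum]
      _ ≤ _ := Finset.sum_le_sum fun y _ => hterm y
end

section
/- Let X be a finite set with |X| > 2 and let d be any metric on X. Then there is no universally optimal d-private mechanism: there is no d-private channel M : X → Y → ℝ (Y finite nonempty) such that for every finite nonempty action set W, every loss function ℓ : W → X → ℝ, every prior π on X, every finite nonempty set Y', and every d-private channel M' : X → Y' → ℝ, one has U_ℓ[π⟩M] ≤ U_ℓ[π⟩M']. -/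
open Finset

/-!
Let `a ≠ b` be a closest pair of points, `E = exp (d a b)`, `c` a third point and
`p y = M a y - M b y`. Testing a universally optimal `M` against two-action decision problems
gives `θ ⬝ N y' ≤ ∑ y, (θ ⬝ M y)⁺` for every private channel `N`. Randomized response reporting
membership in `S` with probability `E / (1 + E)` is private for every `S`, and `S = {a}`,
`S = {a, c}` give the lower bound `(2 + ε) (E - 1) / (E + 1)` for the second difference
`∑ (p + ε M c)⁺ + ∑ (p - ε M c)⁺`. But `M c ≤ exp (d c a) • M a` and `(p + s)⁺ + (p - s)⁺`
increases with `|s|`, so this second difference is at most the one in direction `M a`, and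
privacy between the rows `a` and `b` alone caps that at `2 (E - 1) / (E + 1)` for small `ε`.
-/

section

variable {X Y : Type}

lemma IsMetric.nonneg {d : X → X → ℝ} (hd : IsMetric d) (x x' : X) : 0 ≤ d x x' := by
  obtain rfl | h := eq_or_ne x x'
  exacts [(hd.1 x).ge, (hd.2.1 x x' h).le]

lemma exists_pair_ne_forall_le [Finite X] [Nontrivial X] (d : X → X → ℝ) :
    ∃ a b, a ≠ b ∧ ∀ x x', x ≠ x' → d a b ≤ d x x' := by
  have : Nonempty {q : X × X // q.1 ≠ q.2} :=
    let ⟨a, b, hab⟩ := exists_pair_ne X; ⟨⟨(a, b), hab⟩⟩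
  obtain ⟨⟨⟨a, b⟩, hab⟩, hmin⟩ := Finite.exists_min fun q : {q : X × X // q.1 ≠ q.2} ↦ d q.1.1 q.1.2
  exact ⟨a, b, hab, fun x x' hxx' ↦ hmin ⟨(x, x'), hxx'⟩⟩

lemma exists_ne_ne_of_two_lt_card [Fintype X] (hX : 2 < Fintype.card X) (a b : X) :
    ∃ c, c ≠ a ∧ c ≠ b := by
  classical
  obtain ⟨c, -, hc⟩ := exists_mem_notMem_of_card_lt_card
    ((card_le_two : #{a, b} ≤ 2).trans_lt (by rwa [card_univ]))
  simp only [mem_insert, mem_singleton, not_or] at hc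
  exact ⟨c, hc⟩

lemma sum_posPart_eq_sum_filter [Fintype Y] (f : Y → ℝ) :
    ∑ y, (f y)⁺ = ∑ y with 0 < f y, f y := by
  rw [sum_filter]
  refine sum_congr rfl fun y _ ↦ ?_
  split_ifs with h
  · exact posPart_eq_self.2 h.le
  · exact posPart_eq_zero.2 (not_lt.1 h)

lemma posPart_add_add_posPart_sub_le {p u v : ℝ} (hu : 0 ≤ u) (huv : u ≤ v) :
    (p + u)⁺ + (p - u)⁺ ≤ (p + v)⁺ + (p - v)⁺ := by
  simp only [posPart_def, max_def]
  split_ifs <;> linarith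

/-- The bound is attained by `∑_{y ∈ S} u y = E / (E + 1)`, `∑_{y ∈ S} v y = 1 / (E + 1)`, a vertex
of the two-row privacy polytope. -/
lemma sum_posPart_sub_add_le {u v : Y → ℝ} [Fintype Y] {E t : ℝ} (hE : 1 < E)
    (hu : ∑ y, u y = 1) (hv : ∑ y, v y = 1)
    (huv : ∀ y, u y ≤ E * v y) (hvu : ∀ y, v y ≤ E * u y) (ht : |t| * E ≤ E - 1) :
    ∑ y, (u y - v y + t * u y)⁺ ≤ (E - 1 + t * E) / (E + 1) := by
  classical
  rw [sum_posPart_eq_sum_filter, sum_add_distrib, sum_sub_distrib, ← mul_sum,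
    le_div_iff₀ (by linarith)]
  set S := ({y | 0 < u y - v y + t * u y} : Finset Y)
  have hS : ∑ y ∈ S, u y ≤ E * ∑ y ∈ S, v y := by
    rw [mul_sum]; exact sum_le_sum fun y _ ↦ huv y
  have hSc : ∑ y ∈ Sᶜ, v y ≤ E * ∑ y ∈ Sᶜ, u y := by
    rw [mul_sum]; exact sum_le_sum fun y _ ↦ hvu y
  rw [← sum_add_sum_compl S] at hu hv
  rw [eq_sub_of_add_eq' hu, eq_sub_of_add_eq' hv] at hSc
  have ht₁ : 0 ≤ E - 1 + t * E := by nlinarith [neg_abs_le t]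
  have ht₂ : 0 ≤ E - 1 - t := by nlinarith [le_abs_self t]
  refine le_of_mul_le_mul_left ?_ (by linarith : 0 < E - 1)
  nlinarith [mul_nonneg ht₁ (sub_nonneg.2 hSc), mul_nonneg ht₂ (sub_nonneg.2 hS)]

lemma sum_single_add_single_add_single_mul [Fintype X] [DecidableEq X] (a b c : X)
    (α β γ : ℝ) (f : X → ℝ) :
    ∑ x, (Pi.single a α + Pi.single b β + Pi.single c γ : X → ℝ) x * f x =
      α * f a + β * f b + γ * f c := by
  simp [add_mul, sum_add_distrib, Pi.single_apply]

noncomputable def randomizedResponse (E : ℝ) (s : X → Bool) : X → Bool → ℝ :=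
  fun x w ↦ if s x = w then E / (1 + E) else 1 / (1 + E)

lemma isChannel_randomizedResponse {E : ℝ} (hE : 0 ≤ E) (s : X → Bool) :
    IsChannel (randomizedResponse E s) := by
  refine ⟨fun x w ↦ ?_, fun x ↦ ?_⟩
  · unfold randomizedResponse; split_ifs <;> positivity
  · have hsum : E / (1 + E) + 1 / (1 + E) = 1 := by
      rw [← add_div, add_comm, div_self (by positivity)]
    rw [Fintype.sum_bool]
    unfold randomizedResponse
    cases s x <;> simp only [Bool.true_eq_false, Bool.false_eq_true, if_true, if_false] <;>
      linarith

lemma isPrivate_randomizedResponse {d : X → X → ℝ} {E : ℝ} {s : X → Bool} (hE : 1 ≤ E)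
    (hd : ∀ x x', 0 ≤ d x x') (hs : ∀ x x', s x ≠ s x' → E ≤ Real.exp (d x x')) :
    IsPrivate d (randomizedResponse E s) := by
  intro x x' w
  have h1 : 1 ≤ Real.exp (d x x') := Real.one_le_exp (hd x x')
  unfold randomizedResponse
  split_ifs with hx hx'
  · exact le_mul_of_one_le_left (by positivity) h1
  · rw [← mul_div_assoc, mul_one]
    exact div_le_div_of_nonneg_right (hs x x' fun h ↦ hx' (h ▸ hx)) (by positivity)
  · rw [← mul_div_assoc]
    exact div_le_div_of_nonneg_right (one_le_mul_of_one_le_of_one_le h1 hE) (by positivity)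
  · exact le_mul_of_one_le_left (by positivity) h1

def IsUniversallyOptimal [Fintype X] [Fintype Y] (d : X → X → ℝ) (M : X → Y → ℝ) : Prop :=
  ∀ (W : Type) [Fintype W] [Nonempty W] (ℓ : W → X → ℝ) (π : X → ℝ), IsPrior π →
    ∀ (Y' : Type) [Fintype Y'] [Nonempty Y'] (M' : X → Y' → ℝ),
      IsChannel M' → IsPrivate d M' → postLoss π M ℓ ≤ postLoss π M' ℓ

lemma postLoss_ite_eq [Fintype X] [Fintype Y] (π : X → ℝ) (M : X → Y → ℝ) (φ : X → ℝ) :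
    postLoss π M (fun (w : Bool) x ↦ if w then 0 else -φ x) = -∑ y, (∑ x, π x * M x y * φ x)⁺ := by
  unfold postLoss
  rw [← sum_neg_distrib]
  refine sum_congr rfl fun y _ ↦ ?_
  simp [posPart_def, min_comm, ← min_neg_neg]

/-- Under the uniform prior, the loss `0` / `-(card X) • θ` of two actions makes `-postLoss` equal
to `∑ y, (θ ⬝ M y)⁺`, which dominates every single column of a competitor. -/
lemma IsUniversallyOptimal.le_sum_posPart [Fintype X] [Nonempty X] [Fintype Y] {d : X → X → ℝ}
    {M : X → Y → ℝ} (hM : IsUniversallyOptimal d M) {Y' : Type} [Fintype Y'] [Nonempty Y']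
    {N : X → Y' → ℝ} (hN : IsChannel N) (hNd : IsPrivate d N) (θ : X → ℝ) (y' : Y') :
    ∑ x, θ x * N x y' ≤ ∑ y, (∑ x, θ x * M x y)⁺ := by
  set n : ℝ := (Fintype.card X : ℝ)
  have hn : n ≠ 0 := by positivity
  have hπ : IsPrior fun _ : X ↦ n⁻¹ := ⟨fun _ ↦ by positivity, by simp [n, hn]⟩
  have hrescale (Z : Type) (T : X → Z → ℝ) (z : Z) :
      ∑ x, n⁻¹ * T x z * (n * θ x) = ∑ x, θ x * T x z :=
    sum_congr rfl fun x _ ↦ by field_simp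
  have hopt := hM Bool (fun w x ↦ if w then 0 else -(n * θ x)) _ hπ Y' N hN hNd
  simp only [postLoss_ite_eq, hrescale, neg_le_neg_iff] at hopt
  calc ∑ x, θ x * N x y' ≤ ∑ z, (∑ x, θ x * N x z)⁺ :=
        (le_posPart _).trans (single_le_sum (f := fun z ↦ (∑ x, θ x * N x z)⁺)
          (fun z _ ↦ posPart_nonneg _) (mem_univ y'))
    _ ≤ _ := hopt

lemma IsUniversallyOptimal.le_sum_posPart_add_sum_posPart [Fintype X] [Fintype Y]
    {d : X → X → ℝ} {M : X → Y → ℝ} (hM : IsUniversallyOptimal d M) (hd : ∀ x x', 0 ≤ d x x')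
    {a b c : X} (hab : a ≠ b) (hca : c ≠ a) (hcb : c ≠ b)
    (hmin : ∀ x x', x ≠ x' → d a b ≤ d x x') (ε : ℝ) :
    (2 + ε) * ((Real.exp (d a b) - 1) / (Real.exp (d a b) + 1)) ≤
      ∑ y, (M a y - M b y + ε * M c y)⁺ + ∑ y, (M a y - M b y - ε * M c y)⁺ := by
  classical
  have : Nonempty X := ⟨a⟩
  set E := Real.exp (d a b)
  have hE : 1 ≤ E := Real.one_le_exp (hd a b)
  have hrr (s : X → Bool) (γ : ℝ) := hM.le_sum_posPart
    (isChannel_randomizedResponse (by positivity) s)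
    (isPrivate_randomizedResponse hE hd fun x x' h ↦
      Real.exp_le_exp.2 (hmin x x' (ne_of_apply_ne s h)))
    (Pi.single a 1 + Pi.single b (-1) + Pi.single c γ) true
  have h₁ := hrr (fun x ↦ x = a ∨ x = c) ε
  have h₀ := hrr (fun x ↦ x = a) (-ε)
  simp only [sum_single_add_single_add_single_mul, one_mul, neg_mul, ← sub_eq_add_neg] at h₀ h₁
  simp only [randomizedResponse, hca, hab.symm, hcb.symm, true_or, or_true, or_false,
    decide_true, decide_false, if_true, Bool.false_eq_true, if_false] at h₀ h₁
  have hsplit : (2 + ε) * ((E - 1) / (E + 1)) =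
      (E / (1 + E) - 1 / (1 + E) + ε * (E / (1 + E))) +
        (E / (1 + E) - 1 / (1 + E) - ε * (1 / (1 + E))) := by
    field_simp
    ring
  linarith

lemma IsPrivate.sum_posPart_add_sum_posPart_le [Fintype Y] {d : X → X → ℝ} {M : X → Y → ℝ}
    (hM : IsChannel M) (hMd : IsPrivate d M) {a b c : X} (hab : 0 < d a b) (hba : d b a = d a b)
    {ε : ℝ} (hε : 0 ≤ ε) (hεE : ε * Real.exp (d c a) * Real.exp (d a b) ≤ Real.exp (d a b) - 1) :
    ∑ y, (M a y - M b y + ε * M c y)⁺ + ∑ y, (M a y - M b y - ε * M c y)⁺ ≤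
      2 * ((Real.exp (d a b) - 1) / (Real.exp (d a b) + 1)) := by
  set E := Real.exp (d a b)
  set t := ε * Real.exp (d c a)
  have hE : 1 < E := Real.one_lt_exp_iff.2 hab
  have hrows (s : ℝ) (hs : |s| = t) :=
    sum_posPart_sub_add_le (t := s) hE (hM.2 a) (hM.2 b) (hMd a b)
      (fun y ↦ by simpa only [hba] using hMd b a y) (by rw [hs]; exact hεE)
  calc ∑ y, (M a y - M b y + ε * M c y)⁺ + ∑ y, (M a y - M b y - ε * M c y)⁺
      ≤ ∑ y, (M a y - M b y + t * M a y)⁺ + ∑ y, (M a y - M b y + -t * M a y)⁺ := by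
        simp only [← sum_add_distrib, neg_mul, ← sub_eq_add_neg]
        refine sum_le_sum fun y _ ↦ posPart_add_add_posPart_sub_le
          (mul_nonneg hε (hM.1 c y)) ?_
        rw [mul_assoc]
        exact mul_le_mul_of_nonneg_left (hMd c a y) hε
    _ ≤ (E - 1 + t * E) / (E + 1) + (E - 1 + -t * E) / (E + 1) :=
        add_le_add (hrows t (abs_of_nonneg (by positivity)))
          (hrows (-t) (by rw [abs_neg, abs_of_nonneg (by positivity)]))
    _ = 2 * ((E - 1) / (E + 1)) := by ring

end

/-- Impossibility of universally optimal mechanisms: for `|X| > 2` no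
`d`-private channel is optimal for all loss functions and priors. -/
theorem no_universally_optimal_mechanism
    {X : Type} [Fintype X] (hcard : 2 < Fintype.card X)
    (d : X → X → ℝ) (hd : IsMetric d) :
    ¬ ∃ (Y : Type) (_ : Fintype Y) (_ : Nonempty Y) (M : X → Y → ℝ),
        IsChannel M ∧ IsPrivate d M ∧
        ∀ (W : Type) [Fintype W] [Nonempty W] (ℓ : W → X → ℝ)
          (π : X → ℝ), IsPrior π →
          ∀ (Y' : Type) [Fintype Y'] [Nonempty Y'] (M' : X → Y' → ℝ),
            IsChannel M' → IsPrivate d M' →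
              postLoss π M ℓ ≤ postLoss π M' ℓ := by
  rintro ⟨Y, _, _, M, hM, hMd, hopt : IsUniversallyOptimal d M⟩
  have ⟨_, hd_pos, hd_symm, _⟩ := hd
  have : Nontrivial X := Fintype.one_lt_card_iff_nontrivial.1 (by omega)
  obtain ⟨a, b, hab, hmin⟩ := exists_pair_ne_forall_le d
  obtain ⟨c, hca, hcb⟩ := exists_ne_ne_of_two_lt_card hcard a b
  set E := Real.exp (d a b)
  have hE : 1 < E := Real.one_lt_exp_iff.2 (hd_pos a b hab)
  set ε := (E - 1) / (Real.exp (d c a) * E)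
  have hε : 0 < ε := div_pos (by linarith) (by positivity)
  have hεE : ε * Real.exp (d c a) * E ≤ E - 1 := by
    rw [mul_assoc, div_mul_cancel₀ _ (by positivity)]
  have lower := hopt.le_sum_posPart_add_sum_posPart hd.nonneg hab hca hcb hmin ε
  have upper := hMd.sum_posPart_add_sum_posPart_le hM (hd_pos a b hab) (hd_symm b a) hε.le hεE
  have : 0 < ε * ((E - 1) / (E + 1)) := mul_pos hε (div_pos (by linarith) (by linarith))
  linarith
end

section
/- Let X be a finite set with |X| > 2 and let ε > 0. Let ℓ_bin : X → X → ℝ be the Bayes-risk loss defined on action set W = X by ℓ_bin w x = 0 if w = x and ℓ_bin w x = 1 otherwise. Then no ε·d_D-private channel on X is universally ℓ_bin-optimal within the ε·d_D-privacy type (where d_D is the discrete metric). -/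
open Finset

/-- The `ε·d_D`-privacy constraints (discrete metric). -/
def IsPrivateD {X Y : Type} (ε : ℝ) (M : X → Y → ℝ) : Prop :=
  ∀ x x' y, x ≠ x' → M x y ≤ Real.exp ε * M x' y

/-- Universal `ℓ`-optimality within the `ε·d_D`-privacy type. -/
def UnivOptimalD {X W Y : Type} [Fintype X] [Fintype W] [Nonempty W] [Fintype Y]
    (ε : ℝ) (M : X → Y → ℝ) (ℓ : W → X → ℝ) : Prop :=
  ∀ (Y' : Type) [Fintype Y'] [Nonempty Y'] (M' : X → Y' → ℝ),
    IsChannel M' → IsPrivateD ε M' →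
      ∀ π : X → ℝ, IsPrior π → postLoss π M ℓ ≤ postLoss π M' ℓ

set_option maxHeartbeats 1600000 in
/-- No `ε·d_D`-private channel on `|X| > 2` inputs is universally
`ℓ_bin`-optimal, where `ℓ_bin` is the Bayes-risk loss. -/
theorem no_universally_lbin_optimal_discrete
    {X : Type} [Fintype X] [Nonempty X] [DecidableEq X]
    (hcard : 2 < Fintype.card X) (ε : ℝ) (hε : 0 < ε) :
    ¬ ∃ (Y : Type) (_ : Fintype Y) (_ : Nonempty Y) (M : X → Y → ℝ),
        IsChannel M ∧ IsPrivateD ε M ∧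
        UnivOptimalD ε M (fun (w x : X) => if w = x then (0 : ℝ) else 1) := by
  rintro ⟨Y, _, _, M, ⟨hMnn, hMsum⟩, hMpriv, hopt⟩
  set E := Real.exp ε with hEdef
  have hE1 : 1 < E := Real.one_lt_exp_iff.mpr hε
  have hE0 : (0:ℝ) < E := lt_trans one_pos hE1
  have h1E : (0:ℝ) < 1 + E := by linarith
  have h2E : (0:ℝ) < E + 2 := by linarith
  -- three distinct elements
  obtain ⟨a, b, hab⟩ := Fintype.exists_pair_of_one_lt_card (α := X) (by omega)
  obtain ⟨c, hca, hcb⟩ : ∃ c : X, c ≠ a ∧ c ≠ b := by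
    by_contra h
    push_neg at h
    have hsub : (Finset.univ : Finset X) ⊆ {a, b} := by
      intro x _
      rcases eq_or_ne x a with hx | hx
      · simp [hx]
      · simp [h x hx]
    have : Fintype.card X ≤ ({a, b} : Finset X).card := by
      simpa [Finset.card_univ] using Finset.card_le_card hsub
    have h2 : ({a, b} : Finset X).card ≤ 2 := by
      apply le_trans (Finset.card_insert_le _ _); simp
    omega
  set ℓ : X → X → ℝ := fun w x => if w = x then (0 : ℝ) else 1 with hℓdef
  -- priors
  set π1 : X → ℝ := fun x => (if x = a then (1:ℝ)/2 else 0) + (if x = b then (1:ℝ)/2 else 0)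
    with hπ1def
  set π2 : X → ℝ := fun x => (if x = a then (1:ℝ)/3 else 0) + (if x = b then (1:ℝ)/3 else 0)
      + (if x = c then (1:ℝ)/3 else 0) with hπ2def
  have sumind : ∀ (t : X) (r : ℝ) (g : X → ℝ), ∑ x, (if x = t then r else 0) * g x = r * g t := by
    intro t r g
    simp [ite_mul, Finset.sum_ite_eq']
  have hπ1 : IsPrior π1 := by
    constructor
    · intro x; simp only [hπ1def]; split_ifs <;> norm_num
    · simp [hπ1def, Finset.sum_add_distrib, Finset.sum_ite_eq']
      norm_num
  have hπ2 : IsPrior π2 := by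
    constructor
    · intro x; simp only [hπ2def]; split_ifs <;> norm_num
    · simp [hπ2def, Finset.sum_add_distrib, Finset.sum_ite_eq']
      norm_num
  have inner1 : ∀ {Z : Type} (N : X → Z → ℝ) (y : Z) (w : X),
      (∑ x, π1 x * N x y * ℓ w x)
        = (N a y * ℓ w a)/2 + (N b y * ℓ w b)/2 := by
    intro Z N y w
    have key : ∀ x, π1 x * N x y * ℓ w x
        = (if x = a then (1:ℝ)/2 else 0) * (N x y * ℓ w x)
          + (if x = b then (1:ℝ)/2 else 0) * (N x y * ℓ w x) := by
      intro x; simp only [hπ1def]; ring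
    rw [Finset.sum_congr rfl (fun x _ => key x), Finset.sum_add_distrib, sumind, sumind]
    ring
  have inner2 : ∀ {Z : Type} (N : X → Z → ℝ) (y : Z) (w : X),
      (∑ x, π2 x * N x y * ℓ w x)
        = (N a y * ℓ w a)/3 + (N b y * ℓ w b)/3 + (N c y * ℓ w c)/3 := by
    intro Z N y w
    have key : ∀ x, π2 x * N x y * ℓ w x
        = (if x = a then (1:ℝ)/3 else 0) * (N x y * ℓ w x)
          + ((if x = b then (1:ℝ)/3 else 0) * (N x y * ℓ w x)
          + (if x = c then (1:ℝ)/3 else 0) * (N x y * ℓ w x)) := by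
      intro x; simp only [hπ2def]; ring
    rw [Finset.sum_congr rfl (fun x _ => key x), Finset.sum_add_distrib,
      Finset.sum_add_distrib, sumind, sumind, sumind]
    ring
  -- competitor 1 : binary randomized response on {a, b}
  set M1 : X → Bool → ℝ := fun x y =>
    if x = a then (if y then E/(1+E) else 1/(1+E))
    else if x = b then (if y then 1/(1+E) else E/(1+E)) else 1/2 with hM1def
  have hM1lb : ∀ x y, 1/(1+E) ≤ M1 x y := by
    intro x y
    simp only [hM1def]
    split_ifs <;> rw [div_le_div_iff₀ (by positivity) (by positivity)] <;> nlinarith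
  have hM1ub : ∀ x y, M1 x y ≤ E/(1+E) := by
    intro x y
    simp only [hM1def]
    split_ifs <;> rw [div_le_div_iff₀ (by positivity) (by positivity)] <;> nlinarith
  have hM1chan : IsChannel M1 := by
    constructor
    · intro x y; exact le_trans (by positivity) (hM1lb x y)
    · intro x
      simp only [hM1def, Fintype.sum_bool]
      norm_num
      split_ifs <;> field_simp <;> ring
  have hM1priv : IsPrivateD ε M1 := by
    intro x x' y hxx'
    calc M1 x y ≤ E/(1+E) := hM1ub x y
      _ = E * (1/(1+E)) := by ring
      _ ≤ E * M1 x' y := by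
          exact mul_le_mul_of_nonneg_left (hM1lb x' y) hE0.le
  have hℓ_eq : ∀ w x : X, ℓ w x = if w = x then (0:ℝ) else 1 := fun w x => rfl
  -- pair bound
  have hA' : (∑ y, min (M a y) (M b y)) * (1+E) ≤ 2 := by
    have hlow : ∑ y, min (M a y) (M b y) / 2 ≤ postLoss π1 M ℓ := by
      unfold postLoss
      apply Finset.sum_le_sum
      intro y _
      apply Finset.le_inf'
      intro w _
      rw [inner1 M y w, hℓ_eq, hℓ_eq]
      by_cases hwa : w = a
      · rw [if_pos hwa, if_neg (by rw [hwa]; exact hab)]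
        have := min_le_right (M a y) (M b y); linarith
      · by_cases hwb : w = b
        · rw [if_neg hwa, if_pos hwb]
          have := min_le_left (M a y) (M b y); linarith
        · rw [if_neg hwa, if_neg hwb]
          have h1 := min_le_left (M a y) (M b y)
          have h2 := hMnn b y; linarith
    have hup : postLoss π1 M1 ℓ ≤ 1/(1+E) := by
      unfold postLoss
      rw [Fintype.sum_bool]
      have h1 : (univ.inf' univ_nonempty fun w => ∑ x, π1 x * M1 x true * ℓ w x)
          ≤ (1/(1+E))/2 := by
        refine le_trans (Finset.inf'_le _ (Finset.mem_univ a)) ?_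
        rw [inner1 M1 true a, hℓ_eq, hℓ_eq, if_pos rfl, if_neg hab]
        have hb : M1 b true = 1/(1+E) := by simp [hM1def, Ne.symm hab]
        rw [hb]; ring_nf; linarith
      have h2 : (univ.inf' univ_nonempty fun w => ∑ x, π1 x * M1 x false * ℓ w x)
          ≤ (1/(1+E))/2 := by
        refine le_trans (Finset.inf'_le _ (Finset.mem_univ b)) ?_
        rw [inner1 M1 false b, hℓ_eq, hℓ_eq, if_neg (Ne.symm hab), if_pos rfl]
        have ha : M1 a false = 1/(1+E) := by simp [hM1def]
        rw [ha]; ring_nf; linarith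
      linarith
    have hchain := hopt Bool M1 hM1chan hM1priv π1 hπ1
    have hfin : (∑ y, min (M a y) (M b y))/2 ≤ 1/(1+E) := by
      rw [Finset.sum_div] at *
      linarith
    rw [div_le_div_iff₀ (by norm_num) h1E] at hfin
    linarith
  -- competitor 2 : ternary randomized response on {a, b, c}
  set M2 : X → Fin 3 → ℝ := fun x y =>
    if x = a then (if y = 0 then E/(E+2) else 1/(E+2))
    else if x = b then (if y = 1 then E/(E+2) else 1/(E+2))
    else if x = c then (if y = 2 then E/(E+2) else 1/(E+2)) else 1/3 with hM2def
  have hM2lb : ∀ x y, 1/(E+2) ≤ M2 x y := by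
    intro x y
    simp only [hM2def]
    split_ifs <;> rw [div_le_div_iff₀ (by positivity) (by positivity)] <;> nlinarith
  have hM2ub : ∀ x y, M2 x y ≤ E/(E+2) := by
    intro x y
    simp only [hM2def]
    split_ifs <;> rw [div_le_div_iff₀ (by positivity) (by positivity)] <;> nlinarith
  have hM2chan : IsChannel M2 := by
    constructor
    · intro x y; exact le_trans (by positivity) (hM2lb x y)
    · intro x
      simp only [hM2def, Fin.sum_univ_three]
      norm_num [Fin.ext_iff]
      split_ifs <;> (field_simp; try ring)
  have hM2priv : IsPrivateD ε M2 := by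
    intro x x' y hxx'
    calc M2 x y ≤ E/(E+2) := hM2ub x y
      _ = E * (1/(E+2)) := by ring
      _ ≤ E * M2 x' y := mul_le_mul_of_nonneg_left (hM2lb x' y) hE0.le
  -- triple bound
  have hT' : (3 - ∑ y, max (M a y) (max (M b y) (M c y))) * (E+2) ≤ 6 := by
    have hlow2 : ∑ y, (M a y + M b y + M c y - max (M a y) (max (M b y) (M c y)))/3
        ≤ postLoss π2 M ℓ := by
      unfold postLoss
      apply Finset.sum_le_sum
      intro y _
      apply Finset.le_inf'
      intro w _
      rw [inner2 M y w, hℓ_eq, hℓ_eq, hℓ_eq]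
      have hA1 : M a y ≤ max (M a y) (max (M b y) (M c y)) := le_max_left _ _
      have hB1 : M b y ≤ max (M a y) (max (M b y) (M c y)) :=
        le_trans (le_max_left _ _) (le_max_right _ _)
      have hC1 : M c y ≤ max (M a y) (max (M b y) (M c y)) :=
        le_trans (le_max_right _ _) (le_max_right _ _)
      have hmx0 : 0 ≤ max (M a y) (max (M b y) (M c y)) := le_trans (hMnn a y) hA1
      by_cases hwa : w = a
      · rw [if_pos hwa, if_neg (by rw [hwa]; exact hab), if_neg (by rw [hwa]; exact Ne.symm hca)]
        linarith
      · by_cases hwb : w = b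
        · rw [if_neg hwa, if_pos hwb, if_neg (by rw [hwb]; exact Ne.symm hcb)]
          linarith
        · by_cases hwc : w = c
          · rw [if_neg hwa, if_neg hwb, if_pos hwc]
            linarith
          · rw [if_neg hwa, if_neg hwb, if_neg hwc]
            linarith
    have hup2 : postLoss π2 M2 ℓ ≤ 2/(E+2) := by
      unfold postLoss
      rw [Fin.sum_univ_three]
      have h0 : (univ.inf' univ_nonempty fun w => ∑ x, π2 x * M2 x 0 * ℓ w x)
          ≤ 2/(E+2)/3 := by
        refine le_trans (Finset.inf'_le _ (Finset.mem_univ a)) ?_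
        rw [inner2 M2 0 a, hℓ_eq, hℓ_eq, hℓ_eq, if_pos rfl, if_neg hab, if_neg (Ne.symm hca)]
        have hb : M2 b 0 = 1/(E+2) := by simp [hM2def, Ne.symm hab]
        have hc : M2 c 0 = 1/(E+2) := by simp [hM2def, hca, hcb]
        rw [hb, hc]; ring_nf; linarith
      have h1 : (univ.inf' univ_nonempty fun w => ∑ x, π2 x * M2 x 1 * ℓ w x)
          ≤ 2/(E+2)/3 := by
        refine le_trans (Finset.inf'_le _ (Finset.mem_univ b)) ?_
        rw [inner2 M2 1 b, hℓ_eq, hℓ_eq, hℓ_eq, if_neg (Ne.symm hab), if_pos rfl,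
          if_neg (Ne.symm hcb)]
        have ha' : M2 a 1 = 1/(E+2) := by simp [hM2def]
        have hc : M2 c 1 = 1/(E+2) := by simp [hM2def, hca, hcb]
        rw [ha', hc]; ring_nf; linarith
      have h2 : (univ.inf' univ_nonempty fun w => ∑ x, π2 x * M2 x 2 * ℓ w x)
          ≤ 2/(E+2)/3 := by
        refine le_trans (Finset.inf'_le _ (Finset.mem_univ c)) ?_
        rw [inner2 M2 2 c, hℓ_eq, hℓ_eq, hℓ_eq, if_neg hca, if_neg hcb, if_pos rfl]
        have ha' : M2 a 2 = 1/(E+2) := by simp [hM2def]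
        have hb : M2 b 2 = 1/(E+2) := by simp [hM2def, Ne.symm hab]
        rw [ha', hb]; ring_nf; linarith
      linarith
    have hchain2 := hopt (Fin 3) M2 hM2chan hM2priv π2 hπ2
    have hsum3 : ∑ y, (M a y + M b y + M c y) = 3 := by
      rw [Finset.sum_add_distrib, Finset.sum_add_distrib, hMsum a, hMsum b, hMsum c]
      norm_num
    have hfin : (3 - ∑ y, max (M a y) (max (M b y) (M c y)))/3 ≤ 2/(E+2) := by
      have := le_trans hlow2 (le_trans hchain2 hup2)
      rw [← Finset.sum_div, Finset.sum_sub_distrib, hsum3] at this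
      exact this
    rw [div_le_div_iff₀ (by norm_num) h2E] at hfin
    linarith
  -- privacy: max ≤ E * min
  have hTA : (∑ y, max (M a y) (max (M b y) (M c y))) ≤ E * ∑ y, min (M a y) (M b y) := by
    rw [Finset.mul_sum]
    apply Finset.sum_le_sum
    intro y _
    have paa : M a y ≤ E * M a y := by nlinarith [hMnn a y]
    have pba : M b y ≤ E * M a y := hMpriv b a y (Ne.symm hab)
    have pca : M c y ≤ E * M a y := hMpriv c a y hca
    have pbb : M b y ≤ E * M b y := by nlinarith [hMnn b y]
    have pab : M a y ≤ E * M b y := hMpriv a b y hab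
    have pcb : M c y ≤ E * M b y := hMpriv c b y hcb
    rcases le_total (M a y) (M b y) with h | h
    · rw [min_eq_left h]
      exact max_le paa (max_le pba pca)
    · rw [min_eq_right h]
      exact max_le pab (max_le pbb pcb)
  -- final arithmetic contradiction
  have hA0 : 0 ≤ ∑ y, min (M a y) (M b y) :=
    Finset.sum_nonneg fun y _ => le_min (hMnn a y) (hMnn b y)
  set A := ∑ y, min (M a y) (M b y)
  set T := ∑ y, max (M a y) (max (M b y) (M c y))
  have e1 : 3*E ≤ T*(E+2) := by nlinarith
  have e2 : T*(E+2) ≤ E*A*(E+2) := by nlinarith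
  have e3 : 3 ≤ A*(E+2) := by
    by_contra h
    push_neg at h
    nlinarith
  nlinarith
end

section
/- Let X be a finite nonempty set, W a finite nonempty action set, and ℓ : W → X → ℝ a loss function. Suppose there exist a metric d on X, a bijection α : W → X, and a strictly increasing function m : ℝ → ℝ such that ℓ w x = m (d (α w) x) for all w, x (ℓ is strictly monotone in d). Then for every pair x, x' ∈ X with x ≠ x', the restriction of ℓ to {x, x'} is non-trivial: there is no w* ∈ W such that ℓ w* x ≤ ℓ w x and ℓ w* x' ≤ ℓ w x' hold simultaneously for all w ∈ W. -/
open Finset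

/-- A loss function strictly monotone in some metric has non-trivial
restriction to every pair of distinct inputs: no single action `w*`
simultaneously minimises the loss at both inputs. -/
theorem strictMono_loss_pairwise_nontrivial
    {X W : Type} [Fintype X] [Nonempty X] [Fintype W] [Nonempty W]
    (ℓ : W → X → ℝ)
    (d : X → X → ℝ) (hd : IsMetric d)
    (α : W → X) (hα : Function.Bijective α)
    (m : ℝ → ℝ) (hm : StrictMono m)
    (hℓ : ∀ w x, ℓ w x = m (d (α w) x)) :
    ∀ x x' : X, x ≠ x' →
      ¬ ∃ wstar : W, ∀ w : W, ℓ wstar x ≤ ℓ w x ∧ ℓ wstar x' ≤ ℓ w x' := by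
  obtain ⟨h0, hpos, _, _⟩ := hd
  intro x x' hne ⟨ws, hws⟩
  have key : ∀ y : X, (∀ w, ℓ ws y ≤ ℓ w y) → α ws = y := by
    intro y hy
    obtain ⟨w, hw⟩ := hα.surjective y
    have := hy w
    rw [hℓ, hℓ, hw, h0 y] at this
    have hle : d (α ws) y ≤ 0 := le_of_not_gt fun h => absurd this (not_le.mpr (hm h))
    by_contra hne'
    exact absurd hle (not_le.mpr (hpos _ _ hne'))
  exact hne ((key x fun w => (hws w).1) ▸ key x' fun w => (hws w).2)
end

section
/- Let X be a finite set with |X| > 2, let ε > 0, let W be a finite nonempty action set, and let ℓ : W → X → ℝ be a loss function such that for every pair x, x' ∈ X with x ≠ x' there is no w* ∈ W with ℓ w* x ≤ ℓ w x and ℓ w* x' ≤ ℓ w x' for all w ∈ W (all pairwise restrictions of ℓ are non-trivial). Then no ε·d_D-private channel on X is universally ℓ-optimal within the ε·d_D-privacy type (where d_D is the discrete metric). -/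
open Finset

/-!
Pick a column `y₀` of `M` with positive entries. With three or more secrets the ratios
`M x y₀ / M x' y₀` cannot all be `e^{±ε}`, so some pair `x₁ ≠ x₂` satisfies both privacy
constraints strictly at `y₀`. For a prior `(p, 1 - p)` on `{x₁, x₂}`, every private column
restricted to `x₁, x₂` is a nonnegative combination of the columns `(e^ε, 1)` and `(1, e^ε)` of
randomized response, so by concavity of the Bayes risk randomized response does at least as well
as `M`. Optimality of `M` forces equality column by column, and at `y₀`, where both coefficients
are positive, a single action is Bayes-optimal for the posterior weights `(p e^ε, 1 - p)` and
`(p, (1 - p) e^ε)`. Hence every prior in `(0, 1)` lies inside an interval of priors on which one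
action is optimal. Two actions optimal at two distinct priors have equal losses, so the action
optimal around `1/2` stays optimal on all of `[0, 1]`: it minimises both `ℓ · x₁` and `ℓ · x₂`.
-/

open Real Set

section InfLemmas

variable {ι : Type*} {s : Finset ι} (hs : s.Nonempty) {f g : ι → ℝ} {α β : ℝ}
include hs

lemma mul_inf'_of_nonneg (hα : 0 ≤ α) (f : ι → ℝ) :
    α * s.inf' hs f = s.inf' hs fun i => α * f i :=
  map_finset_inf' (OrderHom.mk (α * ·) (monotone_mul_left_of_nonneg hα)) hs f

lemma mul_inf'_add_mul_inf'_le (hα : 0 ≤ α) (hβ : 0 ≤ β) :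
    α * s.inf' hs f + β * s.inf' hs g ≤ s.inf' hs fun i => α * f i + β * g i :=
  Finset.le_inf' _ _ fun _ hi => add_le_add (mul_le_mul_of_nonneg_left (Finset.inf'_le f hi) hα)
    (mul_le_mul_of_nonneg_left (Finset.inf'_le g hi) hβ)

lemma exists_isMinOn_isMinOn_of_inf'_add_le (hα : 0 < α) (hβ : 0 < β)
    (h : (s.inf' hs fun i => α * f i + β * g i) ≤ α * s.inf' hs f + β * s.inf' hs g) :
    ∃ i ∈ s, IsMinOn f s i ∧ IsMinOn g s i := by
  obtain ⟨i, hi, hi_inf⟩ := Finset.exists_mem_eq_inf' hs fun i => α * f i + β * g i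
  have hfi := Finset.inf'_le f hi
  have hgi := Finset.inf'_le g hi
  have hf : f i ≤ s.inf' hs f := by nlinarith
  have hg : g i ≤ s.inf' hs g := by nlinarith
  exact ⟨i, hi, fun j hj => hf.trans (Finset.inf'_le f hj),
    fun j hj => hg.trans (Finset.inf'_le g hj)⟩

end InfLemmas

section MixedLoss

variable {W : Type} {ℓ₁ ℓ₂ : W → ℝ}

def mixLoss (ℓ₁ ℓ₂ : W → ℝ) (a b : ℝ) (w : W) : ℝ := a * ℓ₁ w + b * ℓ₂ w

lemma mixLoss_swap (a b : ℝ) : mixLoss ℓ₂ ℓ₁ b a = mixLoss ℓ₁ ℓ₂ a b :=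
  funext fun _ => add_comm _ _

lemma mixLoss_swap_one_sub (t : ℝ) :
    mixLoss ℓ₂ ℓ₁ (1 - t) (1 - (1 - t)) = mixLoss ℓ₁ ℓ₂ t (1 - t) := by
  rw [sub_sub_cancel, mixLoss_swap]

lemma mixLoss_one_zero : mixLoss ℓ₁ ℓ₂ 1 0 = ℓ₁ := by
  funext w
  simp [mixLoss]

lemma isMinOn_mixLoss_of_mem_Icc {t₁ t₂ t : ℝ} {w : W}
    (h₁ : IsMinOn (mixLoss ℓ₁ ℓ₂ t₁ (1 - t₁)) univ w)
    (h₂ : IsMinOn (mixLoss ℓ₁ ℓ₂ t₂ (1 - t₂)) univ w) (ht : t ∈ Icc t₁ t₂) :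
    IsMinOn (mixLoss ℓ₁ ℓ₂ t (1 - t)) univ w := by
  intro v _
  have e₁ : mixLoss ℓ₁ ℓ₂ t₁ (1 - t₁) w ≤ mixLoss ℓ₁ ℓ₂ t₁ (1 - t₁) v := h₁ (mem_univ v)
  have e₂ : mixLoss ℓ₁ ℓ₂ t₂ (1 - t₂) w ≤ mixLoss ℓ₁ ℓ₂ t₂ (1 - t₂) v := h₂ (mem_univ v)
  show mixLoss ℓ₁ ℓ₂ t (1 - t) w ≤ mixLoss ℓ₁ ℓ₂ t (1 - t) v
  simp only [mixLoss] at e₁ e₂ ⊢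
  -- the difference of the two mixed losses is affine in `t`, so it is maximal at an endpoint
  rcases le_total (ℓ₁ w - ℓ₂ w) (ℓ₁ v - ℓ₂ v) with h | h
  · nlinarith [mul_le_mul_of_nonneg_left h (sub_nonneg.2 ht.1)]
  · nlinarith [mul_le_mul_of_nonneg_left h (sub_nonneg.2 ht.2)]

lemma eq_of_isMinOn_mixLoss_of_ne {t t' : ℝ} {u v : W} (hne : t ≠ t')
    (hu : IsMinOn (mixLoss ℓ₁ ℓ₂ t (1 - t)) univ u)
    (hu' : IsMinOn (mixLoss ℓ₁ ℓ₂ t' (1 - t')) univ u)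
    (hv : IsMinOn (mixLoss ℓ₁ ℓ₂ t (1 - t)) univ v)
    (hv' : IsMinOn (mixLoss ℓ₁ ℓ₂ t' (1 - t')) univ v) :
    ℓ₁ u = ℓ₁ v ∧ ℓ₂ u = ℓ₂ v := by
  have e : mixLoss ℓ₁ ℓ₂ t (1 - t) u = mixLoss ℓ₁ ℓ₂ t (1 - t) v :=
    le_antisymm (hu (mem_univ v)) (hv (mem_univ u))
  have e' : mixLoss ℓ₁ ℓ₂ t' (1 - t') u = mixLoss ℓ₁ ℓ₂ t' (1 - t') v :=
    le_antisymm (hu' (mem_univ v)) (hv' (mem_univ u))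
  simp only [mixLoss] at e e'
  have hd : (ℓ₁ u - ℓ₁ v) - (ℓ₂ u - ℓ₂ v) = 0 :=
    (mul_eq_zero.1 (by linear_combination e - e')).resolve_left (sub_ne_zero.2 hne)
  exact ⟨by linear_combination e + (1 - t) * hd, by linear_combination e - t * hd⟩

lemma isMinOn_mixLoss_normalize {a b : ℝ} {w : W} (hab : 0 < a + b)
    (h : IsMinOn (mixLoss ℓ₁ ℓ₂ a b) univ w) :
    IsMinOn (mixLoss ℓ₁ ℓ₂ (a / (a + b)) (1 - a / (a + b))) univ w := by
  have hb : 1 - a / (a + b) = b / (a + b) := by field_simp; ring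
  intro v hv
  simp only [mem_ofPred_eq, hb, mixLoss, div_mul_eq_mul_div, ← add_div]
  exact div_le_div_of_nonneg_right (h hv) hab.le

lemma exists_lt_lt_isMinOn_mixLoss {E p : ℝ} {w : W} (hE : 1 < E) (hp : p ∈ Ioo (0 : ℝ) 1)
    (hhi : IsMinOn (mixLoss ℓ₁ ℓ₂ (p * E) (1 - p)) univ w)
    (hlo : IsMinOn (mixLoss ℓ₁ ℓ₂ p ((1 - p) * E)) univ w) :
    ∃ a b w, a < p ∧ p < b ∧
      IsMinOn (mixLoss ℓ₁ ℓ₂ a (1 - a)) univ w ∧ IsMinOn (mixLoss ℓ₁ ℓ₂ b (1 - b)) univ w := by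
  obtain ⟨hp0, hp1⟩ := hp
  have hlo_pos : 0 < p + (1 - p) * E := by nlinarith
  have hhi_pos : 0 < p * E + (1 - p) := by nlinarith
  have key := mul_pos (mul_pos hp0 (sub_pos.2 hp1)) (sub_pos.2 hE)
  refine ⟨_, _, w, ?_, ?_, isMinOn_mixLoss_normalize hlo_pos hlo,
    isMinOn_mixLoss_normalize hhi_pos hhi⟩
  · rw [div_lt_iff₀ hlo_pos]; nlinarith
  · rw [lt_div_iff₀ hhi_pos]; nlinarith

lemma isClosed_setOf_isMinOn_mixLoss (w : W) :
    IsClosed {t : ℝ | IsMinOn (mixLoss ℓ₁ ℓ₂ t (1 - t)) univ w} := by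
  simp only [isMinOn_univ_iff, ofPred_forall, mixLoss]
  exact isClosed_iInter fun v => isClosed_le (by fun_prop) (by fun_prop)

def HasLocalCommonMinimizers (ℓ₁ ℓ₂ : W → ℝ) : Prop :=
  ∀ p ∈ Ioo (0 : ℝ) 1, ∃ a b w, a < p ∧ p < b ∧
    IsMinOn (mixLoss ℓ₁ ℓ₂ a (1 - a)) univ w ∧ IsMinOn (mixLoss ℓ₁ ℓ₂ b (1 - b)) univ w

lemma HasLocalCommonMinimizers.swap (H : HasLocalCommonMinimizers ℓ₁ ℓ₂) :
    HasLocalCommonMinimizers ℓ₂ ℓ₁ := by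
  intro p hp
  obtain ⟨a, b, w, hap, hpb, ha, hb⟩ := H (1 - p) ⟨by linarith [hp.2], by linarith [hp.1]⟩
  refine ⟨1 - b, 1 - a, w, by linarith, by linarith, ?_, ?_⟩ <;> rwa [mixLoss_swap_one_sub]

lemma HasLocalCommonMinimizers.isMinOn_left (H : HasLocalCommonMinimizers ℓ₁ ℓ₂) {s s' : ℝ}
    {v : W} (hs : 0 ≤ s) (hss' : s < s') (hs' : s' ≤ 1)
    (hv : IsMinOn (mixLoss ℓ₁ ℓ₂ s (1 - s)) univ v)
    (hv' : IsMinOn (mixLoss ℓ₁ ℓ₂ s' (1 - s')) univ v) :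
    IsMinOn ℓ₁ univ v := by
  set I := Icc s 1 ∩ {t | IsMinOn (mixLoss ℓ₁ ℓ₂ t (1 - t)) univ v}
  have hI : IsCompact I := isCompact_Icc.inter_right (isClosed_setOf_isMinOn_mixLoss v)
  have hs'I : s' ∈ I := ⟨⟨hss'.le, hs'⟩, hv'⟩
  obtain ⟨⟨-, hb1⟩, hvb⟩ : sSup I ∈ I := hI.sSup_mem ⟨s', hs'I⟩
  set b := sSup I
  have hs'b : s' ≤ b := le_csSup hI.bddAbove hs'I
  rcases hb1.eq_or_lt with hb | hb
  · rw [hb] at hvb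
    simpa only [mem_ofPred_eq, sub_self, mixLoss_one_zero] using hvb
  obtain ⟨a, c, u, hab, hbc, hua, huc⟩ := H b ⟨by linarith, hb⟩
  -- `u` and `v` are both optimal at `b` and at some `r < b`, so they have the same losses
  set r := max a s
  have hrb : r < b := max_lt hab (by linarith)
  have hvr := isMinOn_mixLoss_of_mem_Icc hv hvb ⟨le_max_right a s, hrb.le⟩
  have hur := isMinOn_mixLoss_of_mem_Icc hua huc ⟨le_max_left a s, (hrb.trans hbc).le⟩
  have hub := isMinOn_mixLoss_of_mem_Icc hua huc ⟨hab.le, hbc.le⟩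
  obtain ⟨h₁, h₂⟩ := eq_of_isMinOn_mixLoss_of_ne hrb.ne hvr hvb hur hub
  have hvc : IsMinOn (mixLoss ℓ₁ ℓ₂ c (1 - c)) univ v := by
    intro x hx
    simpa only [mixLoss, h₁, h₂] using huc hx
  have hsc : s ≤ min c 1 := hss'.le.trans (le_min (hs'b.trans hbc.le) hs')
  have hcI : min c 1 ∈ I :=
    ⟨⟨hsc, min_le_right c 1⟩, isMinOn_mixLoss_of_mem_Icc hv hvc ⟨hsc, min_le_left c 1⟩⟩
  exact absurd (le_csSup hI.bddAbove hcI) (not_le.2 (lt_min hbc hb))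

lemma HasLocalCommonMinimizers.exists_isMinOn (H : HasLocalCommonMinimizers ℓ₁ ℓ₂) :
    ∃ w, IsMinOn ℓ₁ univ w ∧ IsMinOn ℓ₂ univ w := by
  obtain ⟨a, b, w, ha, hb, hwa, hwb⟩ := H (1 / 2) ⟨by norm_num, by norm_num⟩
  have hs : max a 0 < min b 1 :=
    max_lt (lt_min (ha.trans hb) (by linarith)) (lt_min (by linarith) one_pos)
  have hws := isMinOn_mixLoss_of_mem_Icc hwa hwb
    ⟨le_max_left a 0, max_le (ha.trans hb).le (by linarith)⟩
  have hws' := isMinOn_mixLoss_of_mem_Icc hwa hwb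
    ⟨le_min (ha.trans hb).le (by linarith), min_le_left b 1⟩
  refine ⟨w, H.isMinOn_left (le_max_right a 0) hs (min_le_right b 1) hws hws', ?_⟩
  refine H.swap.isMinOn_left (s := 1 - min b 1) (s' := 1 - max a 0)
    (sub_nonneg.2 (min_le_right b 1)) (by linarith) (by linarith [le_max_right a 0]) ?_ ?_
  all_goals rwa [mixLoss_swap_one_sub]

end MixedLoss

section MixedValue

variable {W : Type} [Fintype W] [Nonempty W] {ℓ₁ ℓ₂ : W → ℝ}

noncomputable def mixValue (ℓ₁ ℓ₂ : W → ℝ) (a b : ℝ) : ℝ :=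
  univ.inf' univ_nonempty (mixLoss ℓ₁ ℓ₂ a b)

lemma mixValue_mul {c : ℝ} (hc : 0 ≤ c) (a b : ℝ) :
    mixValue ℓ₁ ℓ₂ (c * a) (c * b) = c * mixValue ℓ₁ ℓ₂ a b := by
  rw [mixValue, mixValue, mul_inf'_of_nonneg _ hc]
  congr 1
  funext w
  simp only [mixLoss]
  ring

/-- The weights `(a m₁, b m₂)` are `α (a E, b) + β (a, b E)`, with `α, β ≥ 0` exactly when
`m₁ ≤ E m₂` and `m₂ ≤ E m₁`. -/
lemma mixValue_eq_inf'_add {E : ℝ} (hE : 1 < E) (m₁ m₂ a b : ℝ) :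
    mixValue ℓ₁ ℓ₂ (a * m₁) (b * m₂) = univ.inf' univ_nonempty fun w =>
      (E * m₁ - m₂) / (E ^ 2 - 1) * mixLoss ℓ₁ ℓ₂ (a * E) b w +
        (E * m₂ - m₁) / (E ^ 2 - 1) * mixLoss ℓ₁ ℓ₂ a (b * E) w := by
  have : E ^ 2 - 1 ≠ 0 := by nlinarith
  rw [mixValue]
  congr 1
  funext w
  simp only [mixLoss]
  field_simp
  ring

lemma mixValue_ge_of_le_mul {E m₁ m₂ : ℝ} (hE : 1 < E) (h₁ : m₁ ≤ E * m₂) (h₂ : m₂ ≤ E * m₁)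
    (a b : ℝ) :
    (E * m₁ - m₂) / (E ^ 2 - 1) * mixValue ℓ₁ ℓ₂ (a * E) b +
      (E * m₂ - m₁) / (E ^ 2 - 1) * mixValue ℓ₁ ℓ₂ a (b * E) ≤
        mixValue ℓ₁ ℓ₂ (a * m₁) (b * m₂) := by
  have hE2 : 0 < E ^ 2 - 1 := by nlinarith
  rw [mixValue_eq_inf'_add hE]
  exact mul_inf'_add_mul_inf'_le _ (div_nonneg (by linarith) hE2.le)
    (div_nonneg (by linarith) hE2.le)

lemma exists_isMinOn_of_mixValue_le {E m₁ m₂ a b : ℝ} (hE : 1 < E) (h₁ : m₁ < E * m₂)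
    (h₂ : m₂ < E * m₁)
    (h : mixValue ℓ₁ ℓ₂ (a * m₁) (b * m₂) ≤
      (E * m₁ - m₂) / (E ^ 2 - 1) * mixValue ℓ₁ ℓ₂ (a * E) b +
        (E * m₂ - m₁) / (E ^ 2 - 1) * mixValue ℓ₁ ℓ₂ a (b * E)) :
    ∃ w, IsMinOn (mixLoss ℓ₁ ℓ₂ (a * E) b) univ w ∧
      IsMinOn (mixLoss ℓ₁ ℓ₂ a (b * E)) univ w := by
  have hE2 : 0 < E ^ 2 - 1 := by nlinarith
  rw [mixValue_eq_inf'_add hE] at h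
  obtain ⟨w, -, hw⟩ := exists_isMinOn_isMinOn_of_inf'_add_le _
    (div_pos (by linarith) hE2) (div_pos (by linarith) hE2) h
  exact ⟨w, by simpa only [Finset.coe_univ] using hw⟩

end MixedValue

section Channels

variable {X Y W : Type} [DecidableEq X]

def pairPrior (x₁ x₂ : X) (p : ℝ) (x : X) : ℝ :=
  if x = x₁ then p else if x = x₂ then 1 - p else 0

lemma sum_pairPrior_mul [Fintype X] {x₁ x₂ : X} (h : x₁ ≠ x₂) (p : ℝ) (f : X → ℝ) :
    ∑ x, pairPrior x₁ x₂ p x * f x = p * f x₁ + (1 - p) * f x₂ := by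
  simp [pairPrior, ite_mul, Finset.sum_ite, Finset.filter_eq', Finset.filter_ne', h.symm]

lemma isPrior_pairPrior [Fintype X] {x₁ x₂ : X} (h : x₁ ≠ x₂) {p : ℝ}
    (hp : p ∈ Set.Icc (0 : ℝ) 1) :
    IsPrior (pairPrior x₁ x₂ p) := by
  refine ⟨fun x => ?_, by simpa using sum_pairPrior_mul h p fun _ => 1⟩
  unfold pairPrior
  split_ifs <;> linarith [hp.1, hp.2]

lemma postLoss_pairPrior [Fintype X] [Fintype Y] [Fintype W] [Nonempty W] {x₁ x₂ : X}
    (h : x₁ ≠ x₂) (p : ℝ) (M : X → Y → ℝ) (ℓ : W → X → ℝ) :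
    postLoss (pairPrior x₁ x₂ p) M ℓ =
      ∑ y, mixValue (ℓ · x₁) (ℓ · x₂) (p * M x₁ y) ((1 - p) * M x₂ y) := by
  refine Finset.sum_congr rfl fun y _ => congrArg _ (funext fun w => ?_)
  simp only [mul_assoc, sum_pairPrior_mul h, mixLoss]

noncomputable def binaryRR (E : ℝ) (x₁ : X) (x : X) (b : Bool) : ℝ :=
  (if b = decide (x = x₁) then E else 1) / (1 + E)

lemma isChannel_binaryRR {E : ℝ} (hE : 0 ≤ E) (x₁ : X) : IsChannel (binaryRR E x₁) := by
  refine ⟨fun x b => div_nonneg (by split_ifs <;> linarith) (by linarith), fun x => ?_⟩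
  rw [Fintype.sum_bool, binaryRR, binaryRR, ← add_div, div_eq_one_iff_eq (by linarith)]
  by_cases hx : x = x₁ <;> simp [hx, add_comm]

lemma isPrivateD_binaryRR {ε : ℝ} (hε : 0 ≤ ε) (x₁ : X) :
    IsPrivateD ε (binaryRR (exp ε) x₁) := by
  have hE : 1 ≤ exp ε := one_le_exp hε
  intro x x' b _
  rw [binaryRR, binaryRR, ← mul_div_assoc]
  exact div_le_div_of_nonneg_right (by split_ifs <;> nlinarith) (by linarith)

lemma postLoss_pairPrior_binaryRR [Fintype X] [Fintype W] [Nonempty W] {x₁ x₂ : X}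
    (h : x₁ ≠ x₂) {E : ℝ} (hE : 0 ≤ E) (p : ℝ) (ℓ : W → X → ℝ) :
    postLoss (pairPrior x₁ x₂ p) (binaryRR E x₁) ℓ =
      (mixValue (ℓ · x₁) (ℓ · x₂) (p * E) (1 - p) +
        mixValue (ℓ · x₁) (ℓ · x₂) p ((1 - p) * E)) / (1 + E) := by
  have hc : 0 ≤ (1 + E)⁻¹ := inv_nonneg.2 (by linarith)
  rw [postLoss_pairPrior h, Fintype.sum_bool, add_div, div_eq_inv_mul, div_eq_inv_mul,
    ← mixValue_mul hc, ← mixValue_mul hc]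
  simp only [binaryRR, decide_true, h.symm, decide_false, Bool.true_eq_false, Bool.false_eq_true,
    if_true, if_false]
  congr 1 <;> congr 1 <;> ring

end Channels

lemma exists_forall_pos_of_isPrivateD {X Y : Type} [Fintype Y] {ε : ℝ} {M : X → Y → ℝ}
    (hM : IsChannel M) (hpriv : IsPrivateD ε M) (x₀ : X) : ∃ y, ∀ x, 0 < M x y := by
  obtain ⟨y, hy⟩ : ∃ y, 0 < M x₀ y := by
    by_contra! h
    linarith [hM.2 x₀, Finset.sum_nonpos (s := Finset.univ) fun y _ => h y]
  refine ⟨y, fun x => ?_⟩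
  by_cases hx : x = x₀
  · exact hx ▸ hy
  · exact pos_of_mul_pos_right ((hy.trans_le (hpriv x₀ x y (Ne.symm hx)))) (exp_pos ε).le

lemma false_of_pairwise_mul_eq {E a b c : ℝ} (hE : 1 < E) (ha : 0 < a) (hb : 0 < b) (hc : 0 < c)
    (hab : a = E * b ∨ b = E * a) (hbc : b = E * c ∨ c = E * b) (hac : a = E * c ∨ c = E * a) :
    False := by
  rcases hab with hab | hab <;> rcases hbc with hbc | hbc <;> rcases hac with hac | hac <;>
    nlinarith [mul_pos ha (sub_pos.2 hE), mul_pos hb (sub_pos.2 hE), mul_pos hc (sub_pos.2 hE)]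

lemma exists_ne_lt_mul_lt_mul {X : Type} [Fintype X] (hcard : 2 < Fintype.card X) {E : ℝ}
    (hE : 1 < E) {m : X → ℝ} (hm : ∀ x, 0 < m x) (hle : ∀ x x', x ≠ x' → m x ≤ E * m x') :
    ∃ x₁ x₂, x₁ ≠ x₂ ∧ m x₁ < E * m x₂ ∧ m x₂ < E * m x₁ := by
  obtain ⟨a, b, c, hab, hac, hbc⟩ := Fintype.two_lt_card_iff.1 hcard
  by_contra! hno
  have tight (x x' : X) (h : x ≠ x') : m x = E * m x' ∨ m x' = E * m x :=
    (hle x x' h).eq_or_lt.imp_right fun hlt => le_antisymm (hle x' x h.symm) (hno x x' h hlt)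
  exact false_of_pairwise_mul_eq hE (hm a) (hm b) (hm c) (tight a b hab) (tight b c hbc)
    (tight a c hac)

lemma exists_isMinOn_of_univOptimalD {X Y W : Type} [Fintype X] [Fintype Y]
    [Fintype W] [Nonempty W] {ε : ℝ} (hε : 0 < ε) {M : X → Y → ℝ} {ℓ : W → X → ℝ}
    (hM : IsChannel M) (hpriv : IsPrivateD ε M) (hopt : UnivOptimalD ε M ℓ) {x₁ x₂ : X}
    (h : x₁ ≠ x₂) {y₀ : Y} (h₁ : M x₁ y₀ < exp ε * M x₂ y₀) (h₂ : M x₂ y₀ < exp ε * M x₁ y₀)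
    {p : ℝ} (hp : p ∈ Set.Icc (0 : ℝ) 1) :
    ∃ w, IsMinOn (mixLoss (ℓ · x₁) (ℓ · x₂) (p * exp ε) (1 - p)) univ w ∧
      IsMinOn (mixLoss (ℓ · x₁) (ℓ · x₂) p ((1 - p) * exp ε)) univ w := by
  classical
  set E := exp ε
  have hE : 1 < E := one_lt_exp_iff.2 hε
  set F := mixValue (ℓ · x₁) (ℓ · x₂) (p * E) (1 - p)
  set G := mixValue (ℓ · x₁) (ℓ · x₂) p ((1 - p) * E)
  set lower : Y → ℝ := fun y =>
    (E * M x₁ y - M x₂ y) / (E ^ 2 - 1) * F + (E * M x₂ y - M x₁ y) / (E ^ 2 - 1) * G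
  set column : Y → ℝ := fun y => mixValue (ℓ · x₁) (ℓ · x₂) (p * M x₁ y) ((1 - p) * M x₂ y)
  have hcol : ∀ y ∈ Finset.univ, lower y ≤ column y :=
    fun y _ => mixValue_ge_of_le_mul hE (hpriv _ _ _ h) (hpriv _ _ _ h.symm) p (1 - p)
  have hrow (x x' : X) : ∑ y, (E * M x y - M x' y) = E - 1 := by
    rw [Finset.sum_sub_distrib, ← Finset.mul_sum, hM.2, hM.2, mul_one]
  have hsum : ∑ y, lower y = (F + G) / (1 + E) := by
    have : E ^ 2 - 1 = (E - 1) * (1 + E) := by ring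
    simp only [lower, Finset.sum_add_distrib, ← Finset.sum_mul, ← Finset.sum_div, hrow, this]
    field_simp [(sub_pos.2 hE).ne']
  -- randomized response attains `∑ y, lower y`, so optimality of `M` forces equality in each column
  have hle : ∑ y, column y ≤ ∑ y, lower y := by
    rw [hsum, ← postLoss_pairPrior_binaryRR h (exp_pos ε).le, ← postLoss_pairPrior h]
    exact hopt Bool _ (isChannel_binaryRR (exp_pos ε).le x₁) (isPrivateD_binaryRR hε.le x₁) _
      (isPrior_pairPrior h hp)
  have hy₀ := (Finset.sum_eq_sum_iff_of_le hcol).1 (le_antisymm (Finset.sum_le_sum hcol) hle) y₀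
    (mem_univ y₀)
  exact exists_isMinOn_of_mixValue_le hE h₁ h₂ hy₀.ge

theorem no_universally_optimal_pairwise_nontrivial_discrete_general
    {X W : Type} [Fintype X] [Fintype W] [Nonempty W]
    (hcard : 2 < Fintype.card X) (ε : ℝ) (hε : 0 < ε)
    (ℓ : W → X → ℝ)
    (hnt : ∀ x x' : X, x ≠ x' →
      ¬ ∃ wstar : W, ∀ w : W, ℓ wstar x ≤ ℓ w x ∧ ℓ wstar x' ≤ ℓ w x') :
    ¬ ∃ (Y : Type) (_ : Fintype Y) (_ : Nonempty Y) (M : X → Y → ℝ),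
        IsChannel M ∧ IsPrivateD ε M ∧ UnivOptimalD ε M ℓ := by
  classical
  rintro ⟨Y, _, _, M, hM, hpriv, hopt⟩
  have hE : 1 < exp ε := one_lt_exp_iff.2 hε
  obtain ⟨x₀⟩ : Nonempty X := Fintype.card_pos_iff.1 (by omega)
  obtain ⟨y₀, hy₀⟩ := exists_forall_pos_of_isPrivateD hM hpriv x₀
  obtain ⟨x₁, x₂, hne, h₁, h₂⟩ :=
    exists_ne_lt_mul_lt_mul hcard hE hy₀ fun x x' h => hpriv x x' y₀ h
  have H : HasLocalCommonMinimizers (ℓ · x₁) (ℓ · x₂) := fun p hp => by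
    obtain ⟨w, hhi, hlo⟩ := exists_isMinOn_of_univOptimalD hε hM hpriv hopt hne h₁ h₂
      (Ioo_subset_Icc_self hp)
    exact exists_lt_lt_isMinOn_mixLoss hE hp hhi hlo
  obtain ⟨w, hw₁, hw₂⟩ := H.exists_isMinOn
  exact hnt x₁ x₂ hne ⟨w, fun w' => ⟨hw₁ (mem_univ w'), hw₂ (mem_univ w')⟩⟩

/-- If all pairwise restrictions of `ℓ` are non-trivial then no
`ε·d_D`-private channel on `|X| > 2` inputs is universally `ℓ`-optimal. -/
theorem no_universally_optimal_pairwise_nontrivial_discrete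
    {X W : Type} [Fintype X] [Nonempty X] [Fintype W] [Nonempty W]
    (hcard : 2 < Fintype.card X) (ε : ℝ) (hε : 0 < ε)
    (ℓ : W → X → ℝ)
    (hnt : ∀ x x' : X, x ≠ x' →
      ¬ ∃ wstar : W, ∀ w : W, ℓ wstar x ≤ ℓ w x ∧ ℓ wstar x' ≤ ℓ w x') :
    ¬ ∃ (Y : Type) (_ : Fintype Y) (_ : Nonempty Y) (M : X → Y → ℝ),
        IsChannel M ∧ IsPrivateD ε M ∧ UnivOptimalD ε M ℓ :=
  no_universally_optimal_pairwise_nontrivial_discrete_general hcard ε hε ℓ hnt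
end

section
/- Let X be a finite nonempty set with a metric d. Then the supremum, over all finite nonempty Y and all d-private channels C : X → Y → ℝ, of the multiplicative Bayes capacity Σ_{y∈Y} max_{x∈X} C x y equals the maximum, over all d-private channels m : X → X → ℝ (square stochastic matrices satisfying m x y ≤ exp(d x x') · m x' y for all x, x', y), of the trace Σ_{x∈X} m x x; in particular this supremum is attained by a d-private channel whose output set has cardinality |X|. -/
open Finset

/-- The multiplicative Bayes capacity of a channel. -/
noncomputable def multCap {X Y : Type} [Fintype X] [Nonempty X] [Fintype Y]
    (C : X → Y → ℝ) : ℝ :=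
  ∑ y, Finset.univ.sup' Finset.univ_nonempty fun x => C x y

/-- Reduction: any `d`-private channel has a square `d`-private channel with
trace equal to its multiplicative Bayes capacity. -/
lemma reduce_lemma {X Y : Type} [Fintype X] [Nonempty X] [Fintype Y]
    (d : X → X → ℝ) (C : X → Y → ℝ) (hC : IsChannel C) (hP : IsPrivate d C) :
    ∃ m : X → X → ℝ, IsChannel m ∧ IsPrivate d m ∧ ∑ x, m x x = multCap C := by
  classical
  have hsel : ∀ y : Y, ∃ x : X, (univ.sup' univ_nonempty fun x => C x y) = C x y := by
    intro y
    obtain ⟨b, _, hb⟩ := Finset.exists_mem_eq_sup' (univ_nonempty) (fun x => C x y)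
    exact ⟨b, hb⟩
  choose f hf using hsel
  refine ⟨fun x x' => ∑ y ∈ univ.filter (fun y => f y = x'), C x y, ⟨?_, ?_⟩, ?_, ?_⟩
  · intro x x'
    exact Finset.sum_nonneg fun y _ => hC.1 x y
  · intro x
    rw [← hC.2 x]
    exact Finset.sum_fiberwise univ f (fun y => C x y)
  · intro a b c
    rw [Finset.mul_sum]
    exact Finset.sum_le_sum fun y _ => hP a b y
  · have h1 : ∀ x : X, ∑ y ∈ univ.filter (fun y => f y = x), C x y
        = ∑ y ∈ univ.filter (fun y => f y = x), C (f y) y := by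
      intro x
      refine Finset.sum_congr rfl fun y hy => ?_
      rw [(Finset.mem_filter.mp hy).2]
    calc ∑ x, ∑ y ∈ univ.filter (fun y => f y = x), C x y
        = ∑ x, ∑ y ∈ univ.filter (fun y => f y = x), C (f y) y := by
          exact Finset.sum_congr rfl fun x _ => h1 x
      _ = ∑ y, C (f y) y := Finset.sum_fiberwise univ f (fun y => C (f y) y)
      _ = multCap C := by
          unfold multCap
          exact Finset.sum_congr rfl fun y _ => (hf y).symm

/-- Existence of a trace-maximizing square `d`-private channel, by compactness. -/
lemma exists_max_trace {X : Type} [Fintype X] [Nonempty X]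
    (d : X → X → ℝ) (hd : IsMetric d) :
    ∃ m : X → X → ℝ, IsChannel m ∧ IsPrivate d m ∧
      ∀ m' : X → X → ℝ, IsChannel m' → IsPrivate d m' →
        ∑ x, m' x x ≤ ∑ x, m x x := by
  classical
  have hd0 : ∀ x x', 0 ≤ d x x' := by
    intro x x'
    by_cases h : x = x'
    · subst h; rw [hd.1]
    · exact (hd.2.1 x x' h).le
  set S : Set (X → X → ℝ) := {m | IsChannel m ∧ IsPrivate d m} with hS
  have hcardpos : (0 : ℝ) < (Fintype.card X : ℝ) := by
    exact_mod_cast Fintype.card_pos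
  have hne : S.Nonempty := by
    refine ⟨fun _ _ => (Fintype.card X : ℝ)⁻¹, ⟨fun x y => by positivity, fun x => ?_⟩, ?_⟩
    · rw [Finset.sum_const, card_univ, nsmul_eq_mul, mul_inv_cancel₀ (ne_of_gt hcardpos)]
    · intro x x' y
      exact le_mul_of_one_le_left (by positivity) (Real.one_le_exp (hd0 x x'))
  have hev : ∀ x y : X, Continuous fun m : X → X → ℝ => m x y :=
    fun x y => (continuous_apply y).comp (continuous_apply x)
  have hclosed : IsClosed S := by
    have : S = (⋂ x, ⋂ y, {m : X → X → ℝ | 0 ≤ m x y}) ∩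
        ((⋂ x, {m : X → X → ℝ | ∑ y, m x y = 1}) ∩
         ⋂ x, ⋂ x', ⋂ y, {m : X → X → ℝ | m x y ≤ Real.exp (d x x') * m x' y}) := by
      ext m
      simp only [hS, Set.mem_setOf_eq, Set.mem_inter_iff, Set.mem_iInter, IsChannel, IsPrivate]
      tauto
    rw [this]
    refine IsClosed.inter ?_ (IsClosed.inter ?_ ?_)
    · exact isClosed_iInter fun x => isClosed_iInter fun y =>
        isClosed_le continuous_const (hev x y)
    · exact isClosed_iInter fun x =>
        isClosed_eq (continuous_finset_sum _ fun y _ => hev x y) continuous_const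
    · exact isClosed_iInter fun x => isClosed_iInter fun x' => isClosed_iInter fun y =>
        isClosed_le (hev x y) (continuous_const.mul (hev x' y))
  have hK : IsCompact (Set.univ.pi fun _ : X => Set.univ.pi fun _ : X => Set.Icc (0:ℝ) 1) :=
    isCompact_univ_pi fun _ => isCompact_univ_pi fun _ => isCompact_Icc
  have hsub : S ⊆ Set.univ.pi fun _ : X => Set.univ.pi fun _ : X => Set.Icc (0:ℝ) 1 := by
    rintro m ⟨⟨hnn, hsum⟩, -⟩ x - y -
    refine ⟨hnn x y, ?_⟩
    rw [← hsum x]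
    exact Finset.single_le_sum (fun y _ => hnn x y) (mem_univ y)
  have hScomp : IsCompact S := hK.of_isClosed_subset hclosed hsub
  have hcont : ContinuousOn (fun m : X → X → ℝ => ∑ x, m x x) S :=
    (continuous_finset_sum _ fun x _ => hev x x).continuousOn
  obtain ⟨m, hmS, hmax⟩ := hScomp.exists_isMaxOn hne hcont
  exact ⟨m, hmS.1, hmS.2, fun m' h1 h2 => hmax ⟨h1, h2⟩⟩

/-- The supremum of the multiplicative Bayes capacity over the `d`-privacy type
equals the maximal trace over square `d`-private stochastic matrices, and it
is attained by a `d`-private channel with `|X|` outputs. -/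
theorem multiplicative_capacity_of_privacy_type
    {X : Type} [Fintype X] [Nonempty X]
    (d : X → X → ℝ) (hd : IsMetric d) :
    ∃ m : X → X → ℝ, IsChannel m ∧ IsPrivate d m ∧
      -- m maximises the trace over square d-private channels
      (∀ m' : X → X → ℝ, IsChannel m' → IsPrivate d m' →
          ∑ x, m' x x ≤ ∑ x, m x x) ∧
      -- the maximal trace bounds the multiplicative Bayes capacity of
      -- every d-private channel
      (∀ (Y : Type) (_ : Fintype Y) (_ : Nonempty Y) (C : X → Y → ℝ),
          IsChannel C → IsPrivate d C → multCap C ≤ ∑ x, m x x) ∧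
      -- the bound is attained by a d-private channel with |X| outputs
      (∃ C : X → X → ℝ, IsChannel C ∧ IsPrivate d C ∧
          multCap C = ∑ x, m x x) := by
  obtain ⟨m, hmC, hmP, hmax⟩ := exists_max_trace d hd
  have hbound : ∀ (Y : Type) (_ : Fintype Y) (C : X → Y → ℝ),
      IsChannel C → IsPrivate d C → multCap C ≤ ∑ x, m x x := by
    intro Y _ C hC hP
    obtain ⟨m', h1, h2, h3⟩ := reduce_lemma d C hC hP
    rw [← h3]
    exact hmax m' h1 h2
  refine ⟨m, hmC, hmP, hmax, fun Y hY _ C hC hP => hbound Y hY C hC hP,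
    ⟨m, hmC, hmP, le_antisymm (hbound X _ m hmC hmP) ?_⟩⟩
  exact Finset.sum_le_sum fun x _ =>
    Finset.le_sup' (fun x' => m x' x) (mem_univ x)
end

section
/- Let X be a finite nonempty set with a metric d. Then the supremum, over all finite nonempty Y and all d-private channels C : X → Y → ℝ, of the additive Bayes capacity 1 − Σ_{y∈Y} min_{x∈X} C x y equals 1 − c, where c is the minimum, over all d-private channels m : X → X → ℝ (square stochastic matrices satisfying m x y ≤ exp(d x x') · m x' y for all x, x', y), of the trace Σ_{x∈X} m x x; in particular this supremum is attained by a d-private channel whose output set has cardinality |X|. -/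
open Finset

/-- The additive Bayes capacity of a channel. -/
noncomputable def addCap {X Y : Type} [Fintype X] [Nonempty X] [Fintype Y]
    (C : X → Y → ℝ) : ℝ :=
  1 - ∑ y, Finset.univ.inf' Finset.univ_nonempty fun x => C x y

/-- Key construction: from any `d`-private channel `C : X → Y → ℝ`, build a
square `d`-private channel whose trace equals the sum of column minima of `C`. -/
lemma exists_square_of_channel {X : Type} [Fintype X] [Nonempty X] (d : X → X → ℝ)
    {Y : Type} [Fintype Y] [Nonempty Y] (C : X → Y → ℝ)
    (hC : IsChannel C) (hP : IsPrivate d C) :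
    ∃ m' : X → X → ℝ, IsChannel m' ∧ IsPrivate d m' ∧
      ∑ x, m' x x = ∑ y, Finset.univ.inf' Finset.univ_nonempty fun x => C x y := by
  classical
  choose σ hσmem hσ using fun y : Y =>
    Finset.exists_mem_eq_inf' (Finset.univ_nonempty (α := X)) (fun x => C x y)
  refine ⟨fun x x' => ∑ y ∈ univ.filter (fun y => σ y = x'), C x y, ⟨?_, ?_⟩, ?_, ?_⟩
  · intro x x'
    exact Finset.sum_nonneg fun y _ => hC.1 x y
  · intro x
    dsimp only
    exact (Finset.sum_fiberwise univ σ (C x)).trans (hC.2 x)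
  · intro x x' y
    rw [Finset.mul_sum]
    exact Finset.sum_le_sum fun z _ => hP x x' z
  · have h1 : ∀ x : X, ∑ y ∈ univ.filter (fun y => σ y = x), C x y
        = ∑ y ∈ univ.filter (fun y => σ y = x), C (σ y) y := by
      intro x
      refine Finset.sum_congr rfl fun y hy => ?_
      rw [(Finset.mem_filter.mp hy).2]
    dsimp only
    simp only [h1]
    have h2 : ∑ x, ∑ y ∈ univ.filter (fun y => σ y = x), C (σ y) y = ∑ y, C (σ y) y :=
      Finset.sum_fiberwise univ σ (fun y => C (σ y) y)
    rw [h2]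
    exact Finset.sum_congr rfl fun y _ => (hσ y).symm

/-- The supremum of the additive Bayes capacity over the `d`-privacy type
equals `1 - c`, where `c` is the minimal trace over square `d`-private
stochastic matrices, and it is attained by a `d`-private channel with
`|X|` outputs. -/
theorem additive_capacity_of_privacy_type
    {X : Type} [Fintype X] [Nonempty X]
    (d : X → X → ℝ) (hd : IsMetric d) :
    ∃ m : X → X → ℝ, IsChannel m ∧ IsPrivate d m ∧
      -- m minimises the trace over square d-private channels
      (∀ m' : X → X → ℝ, IsChannel m' → IsPrivate d m' →
          ∑ x, m x x ≤ ∑ x, m' x x) ∧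
      -- 1 minus the minimal trace bounds the additive Bayes capacity of
      -- every d-private channel
      (∀ (Y : Type) (_ : Fintype Y) (_ : Nonempty Y) (C : X → Y → ℝ),
          IsChannel C → IsPrivate d C → addCap C ≤ 1 - ∑ x, m x x) ∧
      -- the bound is attained by a d-private channel with |X| outputs
      (∃ C : X → X → ℝ, IsChannel C ∧ IsPrivate d C ∧
          addCap C = 1 - ∑ x, m x x) := by
  classical
  have hd0 : ∀ x x', 0 ≤ d x x' := by
    intro x x'
    by_cases h : x = x'
    · subst h; rw [hd.1]
    · exact (hd.2.1 x x' h).le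
  set S : Set (X → X → ℝ) := {m | IsChannel m ∧ IsPrivate d m} with hSdef
  have hcard : (0:ℝ) < (Fintype.card X : ℝ) := by
    exact_mod_cast Fintype.card_pos
  have hne : S.Nonempty := by
    refine ⟨fun _ _ => (Fintype.card X : ℝ)⁻¹, ⟨fun x y => by positivity, fun x => by
      rw [Finset.sum_const, Finset.card_univ, nsmul_eq_mul, mul_inv_cancel₀ hcard.ne']⟩, ?_⟩
    intro x x' y
    have h1 : (1:ℝ) ≤ Real.exp (d x x') := Real.one_le_exp (hd0 x x')
    nlinarith [inv_nonneg.mpr hcard.le]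
  have hev : ∀ x y : X, Continuous fun m : X → X → ℝ => m x y :=
    fun x y => (continuous_apply y).comp (continuous_apply x)
  have h1c : IsClosed {m : X → X → ℝ | ∀ x y, 0 ≤ m x y} := by
    simp only [Set.setOf_forall]
    exact isClosed_iInter fun x => isClosed_iInter fun y =>
      isClosed_le continuous_const (hev x y)
  have h2c : IsClosed {m : X → X → ℝ | ∀ x, ∑ y, m x y = 1} := by
    simp only [Set.setOf_forall]
    exact isClosed_iInter fun x =>
      isClosed_eq (continuous_finset_sum univ fun y _ => hev x y) continuous_const
  have h3c : IsClosed {m : X → X → ℝ | IsPrivate d m} := by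
    unfold IsPrivate
    simp only [Set.setOf_forall]
    exact isClosed_iInter fun x => isClosed_iInter fun x' => isClosed_iInter fun y =>
      isClosed_le (hev x y) (continuous_const.mul (hev x' y))
  have hSeq : S = ({m : X → X → ℝ | ∀ x y, 0 ≤ m x y} ∩ {m | ∀ x, ∑ y, m x y = 1})
      ∩ {m | IsPrivate d m} := by
    ext m
    simp [hSdef, IsChannel, and_assoc]
  have hclosed : IsClosed S := by
    rw [hSeq]; exact (h1c.inter h2c).inter h3c
  have hK : IsCompact (Set.pi Set.univ fun _ : X => Set.pi Set.univ fun _ : X => Set.Icc (0:ℝ) 1) :=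
    isCompact_univ_pi fun _ => isCompact_univ_pi fun _ => isCompact_Icc
  have hsub : S ⊆ Set.pi Set.univ fun _ : X => Set.pi Set.univ fun _ : X => Set.Icc (0:ℝ) 1 := by
    intro m hm x _ y _
    refine ⟨hm.1.1 x y, ?_⟩
    calc m x y ≤ ∑ z, m x z :=
          Finset.single_le_sum (fun z _ => hm.1.1 x z) (Finset.mem_univ y)
      _ = 1 := hm.1.2 x
  have hScompact : IsCompact S := hK.of_isClosed_subset hclosed hsub
  obtain ⟨m, hmS, hmin⟩ := hScompact.exists_isMinOn hne
    ((continuous_finset_sum univ fun x _ => hev x x).continuousOn)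
  have hmin' : ∀ m' : X → X → ℝ, IsChannel m' → IsPrivate d m' →
      ∑ x, m x x ≤ ∑ x, m' x x := fun m' h1 h2 => hmin (Set.mem_setOf.mpr ⟨h1, h2⟩)
  have hbound : ∀ (Y : Type) (_ : Fintype Y) (_ : Nonempty Y) (C : X → Y → ℝ),
      IsChannel C → IsPrivate d C → addCap C ≤ 1 - ∑ x, m x x := by
    intro Y _ _ C hC hP
    obtain ⟨m', hm'C, hm'P, hm'tr⟩ := exists_square_of_channel d C hC hP
    have := hmin' m' hm'C hm'P
    unfold addCap
    linarith [hm'tr ▸ this]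
  refine ⟨m, hmS.1, hmS.2, hmin', hbound, m, hmS.1, hmS.2, ?_⟩
  -- attainment: for the minimizer itself, the sum of column minima equals the trace
  obtain ⟨m'', hm''C, hm''P, hm''tr⟩ := exists_square_of_channel d m hmS.1 hmS.2
  have hle : (∑ y, Finset.univ.inf' Finset.univ_nonempty fun x => m x y) ≤ ∑ x, m x x :=
    Finset.sum_le_sum fun y _ =>
      Finset.inf'_le (fun x => m x y) (Finset.mem_univ y)
  have hge : ∑ x, m x x ≤ ∑ y, Finset.univ.inf' Finset.univ_nonempty fun x => m x y := by
    rw [← hm''tr]; exact hmin' m'' hm''C hm''P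
  unfold addCap
  linarith
end

section
/- Let N ≥ 1, let X = {0, 1, …, N−1} ⊂ ℕ with the Euclidean metric d(x, x') = |x − x'|, let ε > 0 and α := exp(−ε). Then for every finite nonempty Y and every channel M : X → Y → ℝ satisfying M x y ≤ exp(ε·|x − x'|) · M x' y for all x, x' ∈ X and y ∈ Y, the multiplicative Bayes capacity satisfies Σ_{y∈Y} max_{x∈X} M x y ≤ (N·(1 − α) + 2α)/(1 + α). -/
open Finset

lemma geom_ident (α : ℝ) (N j : ℕ) (hj : j < N) :
    α * (α ^ j + α ^ (N - 1 - j)) + (1 - α) * ∑ x ∈ Finset.range N, α ^ Nat.dist x j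
      = 1 + α := by
  have hsplit : ∑ x ∈ Finset.range N, α ^ Nat.dist x j
      = ∑ x ∈ Finset.range (j+1), α ^ (j - x) + ∑ x ∈ Finset.Ico (j+1) N, α ^ (x - j) := by
    rw [← Finset.sum_range_add_sum_Ico _ (by omega : j + 1 ≤ N)]
    congr 1
    · exact Finset.sum_congr rfl fun x hx => by
        have : Nat.dist x j = j - x := by
          have hx' := Finset.mem_range.mp hx
          simp [Nat.dist]; omega
        rw [this]
    · exact Finset.sum_congr rfl fun x hx => by
        have : Nat.dist x j = x - j := by
          have hx' := (Finset.mem_Ico.mp hx).1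
          simp [Nat.dist]; omega
        rw [this]
  have h1 : ∑ x ∈ Finset.range (j+1), α ^ (j - x) = ∑ k ∈ Finset.range (j+1), α ^ k := by
    have := Finset.sum_range_reflect (fun k => α ^ k) (j+1)
    simpa using this
  have h2 : ∑ x ∈ Finset.Ico (j+1) N, α ^ (x - j)
      = α * ∑ k ∈ Finset.range (N - 1 - j), α ^ k := by
    rw [Finset.sum_Ico_eq_sum_range, Finset.mul_sum]
    apply Finset.sum_congr (by congr 1; omega)
    intro k hk
    have : j + 1 + k - j = k + 1 := by omega
    rw [this, pow_succ]; ring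
  have g1 := geom_sum_mul α (j+1)
  have g2 := geom_sum_mul α (N - 1 - j)
  have hj1 : α ^ (j + 1) = α ^ j * α := pow_succ α j
  rw [hsplit, h1, h2]
  linear_combination (-1 : ℝ) * g1 - α * g2 + hj1

lemma per_point (N : ℕ) (hN : 0 < N) (α : ℝ) (hα0 : 0 ≤ α) (hα1 : α ≤ 1)
    (a : Fin N → ℝ) (ne : (Finset.univ : Finset (Fin N)).Nonempty)
    (ha : ∀ x j : Fin N, α ^ Nat.dist (x : ℕ) (j : ℕ) * a j ≤ a x) :
    (1 + α) * Finset.univ.sup' ne a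
      ≤ α * (a ⟨0, hN⟩ + a ⟨N - 1, by omega⟩) + (1 - α) * ∑ x, a x := by
  obtain ⟨j, -, hj⟩ := Finset.exists_mem_eq_sup' ne a
  rw [hj]
  have key := geom_ident α N (j : ℕ) j.isLt
  have hsum : (∑ x : Fin N, α ^ Nat.dist (x : ℕ) (j : ℕ))
      = ∑ x ∈ Finset.range N, α ^ Nat.dist x (j : ℕ) :=
    Fin.sum_univ_eq_sum_range (fun x => α ^ Nat.dist x (j : ℕ)) N
  have step1 : (1 + α) * a j
      = α * (α ^ (j : ℕ) * a j + α ^ (N - 1 - (j : ℕ)) * a j)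
        + (1 - α) * ∑ x : Fin N, α ^ Nat.dist (x : ℕ) (j : ℕ) * a j := by
    rw [← Finset.sum_mul, hsum]
    linear_combination (-(a j)) * key
  rw [step1]
  have h0 : α ^ Nat.dist ((⟨0, hN⟩ : Fin N) : ℕ) ((j : ℕ)) * a j ≤ a ⟨0, hN⟩ := ha _ j
  have hL : α ^ Nat.dist ((⟨N - 1, by omega⟩ : Fin N) : ℕ) ((j : ℕ)) * a j
      ≤ a ⟨N - 1, by omega⟩ := ha _ j
  have hd0 : Nat.dist ((⟨0, hN⟩ : Fin N) : ℕ) ((j : ℕ)) = (j : ℕ) := by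
    simp [Nat.dist]
  have hdL : Nat.dist ((⟨N - 1, by omega⟩ : Fin N) : ℕ) ((j : ℕ)) = N - 1 - (j : ℕ) := by
    have := j.isLt
    simp only [Nat.dist]
    omega
  rw [hd0] at h0
  rw [hdL] at hL
  apply add_le_add
  · exact mul_le_mul_of_nonneg_left (add_le_add h0 hL) hα0
  · exact mul_le_mul_of_nonneg_left (Finset.sum_le_sum fun x _ => ha x j) (by linarith)

/-- Dominating multiplicative capacity for the Euclidean privacy type on
`X = {0, …, N−1}`: every `ε·|x−x'|`-private channel has multiplicative
Bayes capacity at most `(N(1−α) + 2α)/(1+α)` with `α = exp(−ε)`. -/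
theorem euclid_dominating_mult_capacity
    (N : ℕ) (hN : 1 ≤ N) (ε : ℝ) (hε : 0 < ε)
    (Y : Type) [Fintype Y] [Nonempty Y]
    (M : Fin N → Y → ℝ) (hM : IsChannel M)
    (hpriv : ∀ (x x' : Fin N) (y : Y),
      M x y ≤ Real.exp (ε * |((x : ℕ) : ℝ) - ((x' : ℕ) : ℝ)|) * M x' y) :
    (∑ y, Finset.univ.sup'
        (Finset.univ_nonempty_iff.mpr (Fin.pos_iff_nonempty.mp hN))
        fun x => M x y)
      ≤ ((N : ℝ) * (1 - Real.exp (-ε)) + 2 * Real.exp (-ε))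
          / (1 + Real.exp (-ε)) := by
  obtain ⟨hnn, hrow⟩ := hM
  set α := Real.exp (-ε) with hαdef
  have hα0 : 0 < α := Real.exp_pos _
  have hα1 : α < 1 := Real.exp_lt_one_iff.mpr (by linarith)
  have hNpos : 0 < N := hN
  have hlt : N - 1 < N := by omega
  set ne : (Finset.univ : Finset (Fin N)).Nonempty :=
    Finset.univ_nonempty_iff.mpr (Fin.pos_iff_nonempty.mp hN) with hne
  have key : ∀ (x j : Fin N) (y : Y), α ^ Nat.dist (x : ℕ) (j : ℕ) * M j y ≤ M x y := by
    intro x j y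
    have h := hpriv j x y
    have hd : |((j : ℕ) : ℝ) - ((x : ℕ) : ℝ)| = (Nat.dist (x : ℕ) (j : ℕ) : ℝ) := by
      have hdist : Nat.dist (x : ℕ) (j : ℕ) = (j : ℕ) - (x : ℕ) + ((x : ℕ) - (j : ℕ)) := by
        simp [Nat.dist]; omega
      rcases le_total ((x : ℕ)) ((j : ℕ)) with hle | hle
      · rw [abs_of_nonneg (sub_nonneg.mpr (Nat.cast_le.mpr hle)), hdist]
        have : (x : ℕ) - (j : ℕ) = 0 := by omega
        rw [this, Nat.add_zero, Nat.cast_sub hle]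
      · rw [abs_of_nonpos (sub_nonpos.mpr (Nat.cast_le.mpr hle)), hdist]
        have : (j : ℕ) - (x : ℕ) = 0 := by omega
        rw [this, Nat.zero_add, Nat.cast_sub hle]
        ring
    rw [hd] at h
    have hpow : α ^ Nat.dist (x : ℕ) (j : ℕ)
        = Real.exp (-(ε * (Nat.dist (x : ℕ) (j : ℕ) : ℝ))) := by
      rw [hαdef, ← Real.exp_nat_mul]; ring_nf
    calc α ^ Nat.dist (x : ℕ) (j : ℕ) * M j y
        ≤ α ^ Nat.dist (x : ℕ) (j : ℕ)
            * (Real.exp (ε * (Nat.dist (x : ℕ) (j : ℕ) : ℝ)) * M x y) :=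
          mul_le_mul_of_nonneg_left h (pow_nonneg hα0.le _)
      _ = M x y := by
          rw [hpow, ← mul_assoc, ← Real.exp_add, neg_add_cancel, Real.exp_zero, one_mul]
  have hy : ∀ y : Y, (1 + α) * (Finset.univ.sup' ne fun x => M x y)
      ≤ α * (M ⟨0, hNpos⟩ y + M ⟨N - 1, hlt⟩ y) + (1 - α) * ∑ x, M x y :=
    fun y => per_point N hNpos α hα0.le hα1.le (fun x => M x y) ne (fun x j => key x j y)
  have h2 : ∑ y, (α * (M ⟨0, hNpos⟩ y + M ⟨N - 1, hlt⟩ y) + (1 - α) * ∑ x, M x y)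
      = (N : ℝ) * (1 - α) + 2 * α := by
    rw [Finset.sum_add_distrib, ← Finset.mul_sum, ← Finset.mul_sum,
        Finset.sum_add_distrib, hrow, hrow, Finset.sum_comm]
    simp only [hrow, Finset.sum_const, Finset.card_univ, Fintype.card_fin, nsmul_eq_mul,
      mul_one]
    ring
  have hsumy : (1 + α) * ∑ y, (Finset.univ.sup' ne fun x => M x y)
      ≤ (N : ℝ) * (1 - α) + 2 * α := by
    rw [Finset.mul_sum]
    calc ∑ y, (1 + α) * (Finset.univ.sup' ne fun x => M x y)
        ≤ ∑ y, (α * (M ⟨0, hNpos⟩ y + M ⟨N - 1, hlt⟩ y) + (1 - α) * ∑ x, M x y) :=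
          Finset.sum_le_sum fun y _ => hy y
      _ = (N : ℝ) * (1 - α) + 2 * α := h2
  rw [le_div_iff₀ (by positivity)]
  linarith [hsumy]
end

section
/- Let X be a finite set with n := |X| ≥ 1 and let ε > 0. Then for every finite nonempty Y and every ε·d_D-private channel M : X → Y → ℝ (i.e. M x y ≤ exp(ε) · M x' y for all x ≠ x' and all y, where d_D is the discrete metric), the following hold: (i) Σ_{y∈Y} max_{x∈X} M x y ≤ n/(1 + (n−1)·exp(−ε)), and (ii) Σ_{y∈Y} min_{x∈X} M x y ≥ 1/(1 + (n−1)·exp(ε)) (equivalently, the additive Bayes capacity 1 − Σ_y min_x M x y is at most 1 − 1/(1 + (n−1)·exp(ε))). -/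
open Finset

lemma col_lower {X Y : Type} [Fintype X] [Nonempty X] [Fintype Y]
    (ε : ℝ) (M : X → Y → ℝ) (hMp : IsPrivateD ε M) (y : Y) :
    (1 + ((Fintype.card X : ℝ) - 1) * Real.exp (-ε)) *
      (Finset.univ.sup' Finset.univ_nonempty fun x => M x y) ≤ ∑ x, M x y := by
  classical
  obtain ⟨a, -, ha⟩ := Finset.exists_mem_eq_sup' Finset.univ_nonempty (fun x => M x y)
  rw [ha]
  have h1 : ∀ x ∈ Finset.univ.erase a, Real.exp (-ε) * M a y ≤ M x y := by
    intro x hx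
    have h := hMp a x y (Finset.ne_of_mem_erase hx).symm
    rw [Real.exp_neg]
    rw [inv_mul_le_iff₀ (Real.exp_pos ε)] at *
    exact h
  have h2 := Finset.sum_le_sum h1
  rw [Finset.sum_const, Finset.card_erase_of_mem (Finset.mem_univ a), nsmul_eq_mul] at h2
  have h3 : ∑ x ∈ Finset.univ.erase a, M x y + M a y = ∑ x, M x y :=
    Finset.sum_erase_add _ _ (Finset.mem_univ a)
  have hcard : ((Fintype.card X - 1 : ℕ) : ℝ) = (Fintype.card X : ℝ) - 1 := by
    have : 1 ≤ Fintype.card X := Fintype.card_pos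
    push_cast [this]; ring
  rw [Finset.card_univ, hcard] at h2
  nlinarith [h2, h3]

lemma col_upper {X Y : Type} [Fintype X] [Nonempty X] [Fintype Y]
    (ε : ℝ) (M : X → Y → ℝ) (hMp : IsPrivateD ε M) (y : Y) :
    ∑ x, M x y ≤ (1 + ((Fintype.card X : ℝ) - 1) * Real.exp ε) *
      (Finset.univ.inf' Finset.univ_nonempty fun x => M x y) := by
  classical
  obtain ⟨a, -, ha⟩ := Finset.exists_mem_eq_inf' Finset.univ_nonempty (fun x => M x y)
  rw [ha]
  have h1 : ∀ x ∈ Finset.univ.erase a, M x y ≤ Real.exp ε * M a y := by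
    intro x hx
    exact hMp x a y (Finset.ne_of_mem_erase hx)
  have h2 := Finset.sum_le_sum h1
  rw [Finset.sum_const, Finset.card_erase_of_mem (Finset.mem_univ a), nsmul_eq_mul] at h2
  have h3 : ∑ x ∈ Finset.univ.erase a, M x y + M a y = ∑ x, M x y :=
    Finset.sum_erase_add _ _ (Finset.mem_univ a)
  have hcard : ((Fintype.card X - 1 : ℕ) : ℝ) = (Fintype.card X : ℝ) - 1 := by
    have : 1 ≤ Fintype.card X := Fintype.card_pos
    push_cast [this]; ring
  rw [Finset.card_univ, hcard] at h2
  nlinarith [h2, h3]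

/-- Dominating capacities for the discrete privacy type:
(i) the multiplicative Bayes capacity of every `ε·d_D`-private channel on `n`
inputs is at most `n/(1+(n−1)·exp(−ε))`, and (ii) its column-minima sum is at
least `1/(1+(n−1)·exp ε)`, i.e. the additive Bayes capacity is at most
`1 − 1/(1+(n−1)·exp ε)`. -/
theorem discrete_dominating_capacities
    {X : Type} [Fintype X] [Nonempty X]
    (ε : ℝ) (hε : 0 < ε)
    (Y : Type) [Fintype Y] [Nonempty Y]
    (M : X → Y → ℝ) (hM : IsChannel M) (hMp : IsPrivateD ε M) :
    ((∑ y, Finset.univ.sup' Finset.univ_nonempty fun x => M x y)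
        ≤ (Fintype.card X : ℝ)
            / (1 + ((Fintype.card X : ℝ) - 1) * Real.exp (-ε))) ∧
    ((1 : ℝ) / (1 + ((Fintype.card X : ℝ) - 1) * Real.exp ε)
        ≤ ∑ y, Finset.univ.inf' Finset.univ_nonempty fun x => M x y) := by
  have hn : (1 : ℝ) ≤ (Fintype.card X : ℝ) := by
    exact_mod_cast Fintype.card_pos
  have htot : ∑ y, ∑ x, M x y = (Fintype.card X : ℝ) := by
    rw [Finset.sum_comm]
    simp [hM.2]
  have hpos1 : (0 : ℝ) < 1 + ((Fintype.card X : ℝ) - 1) * Real.exp (-ε) := by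
    have := Real.exp_pos (-ε); nlinarith
  have hpos2 : (0 : ℝ) < 1 + ((Fintype.card X : ℝ) - 1) * Real.exp ε := by
    have := Real.exp_pos ε; nlinarith
  constructor
  · rw [le_div_iff₀ hpos1, mul_comm]
    calc (1 + ((Fintype.card X : ℝ) - 1) * Real.exp (-ε)) *
          (∑ y, Finset.univ.sup' Finset.univ_nonempty fun x => M x y)
        = ∑ y, ((1 + ((Fintype.card X : ℝ) - 1) * Real.exp (-ε)) *
            Finset.univ.sup' Finset.univ_nonempty fun x => M x y) := by
          rw [Finset.mul_sum]
      _ ≤ ∑ y, ∑ x, M x y := Finset.sum_le_sum fun y _ => col_lower ε M hMp y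
      _ = _ := htot
  · rw [div_le_iff₀ hpos2, mul_comm]
    calc (1 : ℝ) ≤ ∑ y, ∑ x, M x y := by rw [htot]; exact hn
      _ ≤ ∑ y, ((1 + ((Fintype.card X : ℝ) - 1) * Real.exp ε) *
            Finset.univ.inf' Finset.univ_nonempty fun x => M x y) :=
          Finset.sum_le_sum fun y _ => col_upper ε M hMp y
      _ = _ := by rw [← Finset.mul_sum]
end

section
/- Let X be a finite set with n := |X| > 2 and let d be a metric on X. Then the set of extreme points of the convex polytope K_d := { δ : X → ℝ | δ_x ≥ 0 for all x, Σ_x δ_x = 1, and δ_x ≤ exp(d x x') · δ_{x'} for all x, x' ∈ X } has cardinality at least 2·(n − 1). -/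
open Finset

namespace KdAux

variable {X : Type} [Fintype X] [Nonempty X]

/-- normalized exponential of a weight function -/
noncomputable def vert (w : X → ℝ) : X → ℝ := fun z => Real.exp (w z) / ∑ x, Real.exp (w x)

lemma sum_exp_pos (w : X → ℝ) : 0 < ∑ x, Real.exp (w x) :=
  Finset.sum_pos (fun x _ => Real.exp_pos _) Finset.univ_nonempty

lemma exp_shift {u v s t : ℝ} (h : Real.exp u * s = Real.exp v * t) :
    s = Real.exp (v - u) * t := by
  rw [Real.exp_sub, div_mul_eq_mul_div, eq_div_iff (Real.exp_pos u).ne']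
  linear_combination h

lemma vert_ratio (w : X → ℝ) (z p : X) :
    vert w z = Real.exp (w z - w p) * vert w p := by
  have hS := sum_exp_pos w
  unfold vert
  rw [Real.exp_sub]
  field_simp

lemma sum_vert (w : X → ℝ) : ∑ z, vert w z = 1 := by
  have hS := sum_exp_pos w
  unfold vert
  rw [← Finset.sum_div, div_self (ne_of_gt hS)]

lemma vert_pos (w : X → ℝ) (z : X) : 0 < vert w z :=
  div_pos (Real.exp_pos _) (sum_exp_pos w)

lemma vert_mem (d : X → X → ℝ) (w : X → ℝ) (hw : ∀ z z', w z - w z' ≤ d z z') :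
    vert w ∈ Kd d := by
  refine ⟨fun x => (vert_pos w x).le, sum_vert w, ?_⟩
  intro x x'
  rw [vert_ratio w x x']
  have h1 : Real.exp (w x - w x') ≤ Real.exp (d x x') := Real.exp_le_exp.2 (hw x x')
  exact mul_le_mul_of_nonneg_right h1 (vert_pos w x').le

def Tight (d : X → X → ℝ) (w : X → ℝ) (p q : X) : Prop :=
  w p - w q = d p q ∨ w q - w p = d q p

lemma vert_extreme (d : X → X → ℝ) (hd : IsMetric d) (w : X → ℝ)
    (hw : ∀ z z', w z - w z' ≤ d z z') (a b m : X)
    (hza : ∀ z, Tight d w z a ∨ Tight d w z b)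
    (hma : Tight d w m a) (hmb : Tight d w m b) :
    vert w ∈ Set.extremePoints ℝ (Kd d) := by
  have hS := sum_exp_pos w
  rw [mem_extremePoints]
  refine ⟨vert_mem d w hw, ?_⟩
  intro δ₁ h1 δ₂ h2 hseg
  rw [openSegment] at hseg
  obtain ⟨c1, c2, hc1, hc2, hsum, hcomb⟩ := hseg
  have vcomb : ∀ z, vert w z = c1 * δ₁ z + c2 * δ₂ z := by
    intro z
    have := congrFun hcomb z
    simpa using this.symm
  -- forcing along tight constraints
  have force : ∀ z p : X, Tight d w z p →
      δ₁ z = Real.exp (w z - w p) * δ₁ p ∧ δ₂ z = Real.exp (w z - w p) * δ₂ p := by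
    have forceeq : ∀ (z p : X), (w z - w p = d z p) →
        δ₁ z = Real.exp (d z p) * δ₁ p ∧ δ₂ z = Real.exp (d z p) * δ₂ p := by
      intro z p h
      have hv : vert w z = Real.exp (d z p) * vert w p := by
        rw [vert_ratio w z p, h]
      have h1' := h1.2.2 z p
      have h2' := h2.2.2 z p
      have comb : c1 * δ₁ z + c2 * δ₂ z
          = Real.exp (d z p) * (c1 * δ₁ p + c2 * δ₂ p) := by
        rw [← vcomb z, ← vcomb p, hv]
      have A : c1 * δ₁ z ≤ c1 * (Real.exp (d z p) * δ₁ p) :=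
        mul_le_mul_of_nonneg_left h1' hc1.le
      have B : c2 * δ₂ z ≤ c2 * (Real.exp (d z p) * δ₂ p) :=
        mul_le_mul_of_nonneg_left h2' hc2.le
      have e1 : c1 * δ₁ z = c1 * (Real.exp (d z p) * δ₁ p) := by nlinarith
      have e2 : c2 * δ₂ z = c2 * (Real.exp (d z p) * δ₂ p) := by nlinarith
      exact ⟨mul_left_cancel₀ (ne_of_gt hc1) e1, mul_left_cancel₀ (ne_of_gt hc2) e2⟩
    intro z p ht
    rcases ht with h | h
    · have := forceeq z p h
      rw [← h] at this
      exact this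
    · have := forceeq p z h
      rw [← h] at this
      constructor
      · have h' : Real.exp (w p - w z) * δ₁ z = Real.exp 0 * δ₁ p := by
          rw [Real.exp_zero, one_mul]; linear_combination -this.1
        have := exp_shift h'
        rw [this]; congr 1; congr 1; ring
      · have h' : Real.exp (w p - w z) * δ₂ z = Real.exp 0 * δ₂ p := by
          rw [Real.exp_zero, one_mul]; linear_combination -this.2
        have := exp_shift h'
        rw [this]; congr 1; congr 1; ring
  -- every coordinate determined relative to a
  have alla : ∀ z, δ₁ z = Real.exp (w z - w a) * δ₁ a ∧
      δ₂ z = Real.exp (w z - w a) * δ₂ a := by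
    have hba : δ₁ b = Real.exp (w b - w a) * δ₁ a ∧
        δ₂ b = Real.exp (w b - w a) * δ₂ a := by
      have hA := force m a hma
      have hB := force m b hmb
      constructor
      · have hh : Real.exp (w m - w b) * δ₁ b = Real.exp (w m - w a) * δ₁ a := by
          rw [← hB.1, ← hA.1]
        have := exp_shift hh
        rw [this]; congr 1; congr 1; ring
      · have hh : Real.exp (w m - w b) * δ₂ b = Real.exp (w m - w a) * δ₂ a := by
          rw [← hB.2, ← hA.2]
        have := exp_shift hh
        rw [this]; congr 1; congr 1; ring
    intro z
    rcases hza z with h | h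
    · exact force z a h
    · have hz := force z b h
      constructor
      · rw [hz.1, hba.1, ← mul_assoc, ← Real.exp_add]
        congr 2; ring
      · rw [hz.2, hba.2, ← mul_assoc, ← Real.exp_add]
        congr 2; ring
  -- conclude δᵢ = vert w
  have key : ∀ δ' : X → ℝ, δ' ∈ Kd d →
      (∀ z, δ' z = Real.exp (w z - w a) * δ' a) → δ' = vert w := by
    intro δ' hδ' hall
    have hsum1 : (∑ z, Real.exp (w z - w a)) * δ' a = 1 := by
      rw [← hδ'.2.1, Finset.sum_mul]
      exact Finset.sum_congr rfl fun z _ => (hall z).symm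
    have hsum2 : (∑ z, Real.exp (w z - w a)) * vert w a = 1 := by
      have : ∀ z, vert w z = Real.exp (w z - w a) * vert w a := fun z => vert_ratio w z a
      have hv1 : ∑ z, vert w z = 1 := sum_vert w
      rw [← hv1, Finset.sum_mul]
      exact Finset.sum_congr rfl fun z _ => (this z).symm
    have hpos : (0:ℝ) < ∑ z, Real.exp (w z - w a) :=
      Finset.sum_pos (fun x _ => Real.exp_pos _) Finset.univ_nonempty
    have haa : δ' a = vert w a := by
      have := hsum1.trans hsum2.symm
      exact mul_left_cancel₀ (ne_of_gt hpos) this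
    funext z
    rw [hall z, haa, ← vert_ratio]
  exact ⟨key δ₁ h1 (fun z => (alla z).1), key δ₂ h2 (fun z => (alla z).2)⟩

lemma vert_eq_imp {w w' : X → ℝ} (h : vert w = vert w') :
    ∀ z z', w z - w z' = w' z - w' z' := by
  intro z z'
  have hS := sum_exp_pos w
  have hS' := sum_exp_pos w'
  have key : ∀ y : X, Real.exp (w y) * (∑ x, Real.exp (w' x))
      = Real.exp (w' y) * (∑ x, Real.exp (w x)) := by
    intro y
    have h1 := congrFun h y
    unfold vert at h1
    rw [div_eq_div_iff (ne_of_gt hS) (ne_of_gt hS')] at h1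
    exact h1
  have e3 : Real.exp (w z) * Real.exp (w' z') * ((∑ x, Real.exp (w' x)) * (∑ x, Real.exp (w x)))
      = Real.exp (w' z) * Real.exp (w z') * ((∑ x, Real.exp (w' x)) * (∑ x, Real.exp (w x))) := by
    have k1 := key z
    have k2 := key z'
    linear_combination (Real.exp (w' z') * (∑ x, Real.exp (w x))) * k1
      - (Real.exp (w' z) * (∑ x, Real.exp (w x))) * k2
  have e4 : Real.exp (w z) * Real.exp (w' z') = Real.exp (w' z) * Real.exp (w z') :=
    mul_right_cancel₀ (by positivity) e3
  rw [← Real.exp_add, ← Real.exp_add] at e4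
  have := Real.exp_injective e4
  linarith




variable {X : Type} {d : X → X → ℝ}

lemma dnn (hd : IsMetric d) (a b : X) : 0 ≤ d a b := by
  by_cases h : a = b
  · subst h; rw [hd.1]
  · exact (hd.2.1 a b h).le

lemma dzero (hd : IsMetric d) {a b : X} (h : d a b = 0) : a = b := by
  by_contra hne
  exact absurd h (ne_of_gt (hd.2.1 a b hne))

/-- Matched pair: every point lies metrically between `x` and `y`. -/
def Matched (d : X → X → ℝ) (x y : X) : Prop :=
  x ≠ y ∧ ∀ z, d x z + d z y = d x y

lemma matched_symm (hd : IsMetric d) {x y : X} (h : Matched d x y) : Matched d y x := by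
  refine ⟨h.1.symm, fun z => ?_⟩
  have := h.2 z
  rw [hd.2.2.1 y z, hd.2.2.1 z x, hd.2.2.1 y x]
  linarith

lemma matched_unique (hd : IsMetric d) {x y y' : X} (h : Matched d x y)
    (h' : Matched d x y') : y = y' := by
  have h1 := h.2 y'
  have h2 := h'.2 y
  have hs : d y y' = d y' y := hd.2.2.1 y y'
  have : d y y' = 0 := by linarith
  exact dzero hd this

/-- negative cone (peak at x) -/
def coneN (d : X → X → ℝ) (x : X) : X → ℝ := fun z => -(d x z)
/-- positive cone (valley at x) -/
def coneP (d : X → X → ℝ) (x : X) : X → ℝ := fun z => d x z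
/-- tent function with apex pair determined by p, zero at x1 -/
def tent (d : X → X → ℝ) (x1 p : X) : X → ℝ := fun z => |d p z - d p x1|

lemma coneN_lip (hd : IsMetric d) (x : X) : ∀ z z', coneN d x z - coneN d x z' ≤ d z z' := by
  intro z z'
  have := hd.2.2.2 x z z'
  simp only [coneN]
  linarith

lemma coneP_lip (hd : IsMetric d) (x : X) : ∀ z z', coneP d x z - coneP d x z' ≤ d z z' := by
  intro z z'
  have := hd.2.2.2 x z' z
  have hs : d z' z = d z z' := hd.2.2.1 z' z
  simp only [coneP]
  linarith

lemma tent_lip (hd : IsMetric d) (x1 p : X) :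
    ∀ z z', tent d x1 p z - tent d x1 p z' ≤ d z z' := by
  intro z z'
  simp only [tent]
  have h1 : |d p z - d p x1| - |d p z' - d p x1| ≤ |d p z - d p z'| := by
    have := abs_sub_abs_le_abs_sub (d p z - d p x1) (d p z' - d p x1)
    simpa using this
  have h2 : |d p z - d p z'| ≤ d z z' := by
    rw [abs_le]
    have t1 := hd.2.2.2 p z' z
    have t2 := hd.2.2.2 p z z'
    have hs : d z' z = d z z' := hd.2.2.1 z' z
    constructor <;> linarith
  linarith

lemma tentN_lip (hd : IsMetric d) (x1 p : X) :
    ∀ z z', (fun y => -(tent d x1 p y)) z - (fun y => -(tent d x1 p y)) z' ≤ d z z' := by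
  intro z z'
  simp only
  have h1 : |d p z' - d p x1| - |d p z - d p x1| ≤ |d p z' - d p z| := by
    have := abs_sub_abs_le_abs_sub (d p z' - d p x1) (d p z - d p x1)
    simpa using this
  have h2 : |d p z' - d p z| ≤ d z z' := by
    rw [abs_le]
    have t1 := hd.2.2.2 p z' z
    have t2 := hd.2.2.2 p z z'
    have hs : d z' z = d z z' := hd.2.2.1 z' z
    constructor <;> linarith
  simp only [tent]
  linarith

lemma tent_at_x1 (hd : IsMetric d) (x1 p : X) : tent d x1 p x1 = 0 := by
  simp [tent]

lemma tent_at_p (hd : IsMetric d) (x1 p : X) : tent d x1 p p = d p x1 := by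
  simp only [tent]
  rw [hd.1, zero_sub, abs_neg, abs_of_nonneg (dnn hd p x1)]

lemma tent_at_q (hd : IsMetric d) {x1 p q : X} (hpq : Matched d p q) :
    tent d x1 p q = d p q - d p x1 := by
  simp only [tent]
  have h := hpq.2 x1
  have hnn := dnn hd x1 q
  rw [abs_of_nonneg]
  linarith


section Extr
variable [Fintype X] [Nonempty X]

lemma coneN_extreme (hd : IsMetric d) (x : X) :
    vert (coneN d x) ∈ Set.extremePoints ℝ (Kd d) := by
  refine vert_extreme d hd _ (coneN_lip hd x) x x x (fun z => ?_) ?_ ?_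
  · left; right
    simp [coneN, hd.1]
  all_goals
    right
    simp [coneN, hd.1]

lemma coneP_extreme (hd : IsMetric d) (x : X) :
    vert (coneP d x) ∈ Set.extremePoints ℝ (Kd d) := by
  refine vert_extreme d hd _ (coneP_lip hd x) x x x (fun z => ?_) ?_ ?_
  · left; left
    simp only [coneP]
    rw [hd.1, hd.2.2.1 z x]
    ring
  all_goals
    left
    simp [coneP, hd.1]

lemma tentP_extreme (hd : IsMetric d) {p q : X} (x1 : X) (hpq : Matched d p q) :
    vert (tent d x1 p) ∈ Set.extremePoints ℝ (Kd d) := by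
  have heD : d p x1 ≤ d p q := by
    have := hpq.2 x1
    have := dnn hd x1 q
    linarith
  refine vert_extreme d hd _ (tent_lip hd x1 p) p q x1 (fun z => ?_) ?_ ?_
  · by_cases hz : d p z ≤ d p x1
    · left; right
      rw [tent_at_p hd]
      simp only [tent]
      rw [abs_of_nonpos (by linarith)]
      ring
    · right; right
      rw [tent_at_q hd hpq]
      simp only [tent]
      rw [abs_of_nonneg (by linarith)]
      have := hpq.2 z
      have hs : d q z = d z q := hd.2.2.1 q z
      linarith
  · right
    rw [tent_at_p hd, tent_at_x1 hd]
    ring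
  · right
    rw [tent_at_q hd hpq, tent_at_x1 hd]
    have := hpq.2 x1
    have hs : d q x1 = d x1 q := hd.2.2.1 q x1
    linarith

lemma tentN_extreme (hd : IsMetric d) {p q : X} (x1 : X) (hpq : Matched d p q) :
    vert (fun y => -(tent d x1 p y)) ∈ Set.extremePoints ℝ (Kd d) := by
  have heD : d p x1 ≤ d p q := by
    have := hpq.2 x1
    have := dnn hd x1 q
    linarith
  refine vert_extreme d hd _ (tentN_lip hd x1 p) p q x1 (fun z => ?_) ?_ ?_
  · by_cases hz : d p z ≤ d p x1
    · left; left
      simp only [show (fun y => -(tent d x1 p y)) z = -(tent d x1 p z) from rfl,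
        show (fun y => -(tent d x1 p y)) p = -(tent d x1 p p) from rfl]
      rw [tent_at_p hd]
      simp only [tent]
      rw [abs_of_nonpos (by linarith), hd.2.2.1 z p]
      ring
    · right; left
      simp only [show (fun y => -(tent d x1 p y)) z = -(tent d x1 p z) from rfl,
        show (fun y => -(tent d x1 p y)) q = -(tent d x1 p q) from rfl]
      rw [tent_at_q hd hpq]
      simp only [tent]
      rw [abs_of_nonneg (by linarith)]
      have := hpq.2 z
      have hs : d q z = d z q := hd.2.2.1 q z
      linarith
  · left
    simp only [show (fun y => -(tent d x1 p y)) x1 = -(tent d x1 p x1) from rfl,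
      show (fun y => -(tent d x1 p y)) p = -(tent d x1 p p) from rfl]
    rw [tent_at_p hd, tent_at_x1 hd, hd.2.2.1 x1 p]
    ring
  · left
    simp only [show (fun y => -(tent d x1 p y)) x1 = -(tent d x1 p x1) from rfl,
      show (fun y => -(tent d x1 p y)) q = -(tent d x1 p q) from rfl]
    rw [tent_at_q hd hpq, tent_at_x1 hd]
    have := hpq.2 x1
    linarith

end Extr

section Distinct
variable [Fintype X] [Nonempty X]

lemma coneN_inj (hd : IsMetric d) {x x' : X}
    (h : vert (coneN d x) = vert (coneN d x')) : x = x' := by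
  have H := vert_eq_imp h x x'
  simp only [coneN] at H
  rw [hd.1, hd.1] at H
  have hs : d x x' = d x' x := hd.2.2.1 x x'
  have : d x x' = 0 := by linarith
  exact dzero hd this

lemma coneP_inj (hd : IsMetric d) {x x' : X}
    (h : vert (coneP d x) = vert (coneP d x')) : x = x' := by
  have H := vert_eq_imp h x x'
  simp only [coneP] at H
  rw [hd.1, hd.1] at H
  have hs : d x x' = d x' x := hd.2.2.1 x x'
  have : d x x' = 0 := by linarith
  exact dzero hd this

lemma coneN_ne_coneP (hd : IsMetric d) (hcard : 1 < Fintype.card X) {x y : X}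
    (hy : ¬∃ y', Matched d y y') : vert (coneN d x) ≠ vert (coneP d y) := by
  intro h
  have H := vert_eq_imp h
  simp only [coneN, coneP] at H
  -- H z x : -(d x z) + d x x = d y z - d y x
  have key : ∀ z, d y x = d y z + d x z := by
    intro z
    have := H z x
    rw [hd.1] at this
    linarith
  by_cases hxy : x = y
  · subst hxy
    obtain ⟨z, hz⟩ := Fintype.exists_ne_of_one_lt_card hcard x
    have := key z
    rw [hd.1] at this
    have h1 := dnn hd x z
    have : d x z = 0 := by linarith
    exact hz (dzero hd this).symm
  · refine hy ⟨x, fun hne => hxy (hne.symm ▸ rfl), fun z => ?_⟩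
    have := key z
    rw [hd.2.2.1 z x]
    linarith

-- tent vs cones. Context: matched pair (p,q), matched pair (x1,y1), p ∉ {x1,y1}.
section TentCone
variable (hd : IsMetric d) {p q x1 y1 : X}
  (hpq : Matched d p q) (h1 : Matched d x1 y1) (hp1 : p ≠ x1) (hpy : p ≠ y1)
  (hq1 : q ≠ x1)

include hd hpq h1 hp1 hpy hq1

lemma tent_facts :
    0 < d p x1 ∧ d p x1 < d p q ∧ d p y1 = d x1 y1 - d p x1 := by
  have he : 0 < d p x1 := hd.2.1 p x1 hp1
  have hmx1 : d p x1 + d x1 q = d p q := hpq.2 x1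
  have hx1q : 0 < d x1 q := hd.2.1 x1 q (Ne.symm hq1)
  have hpy1 : d x1 p + d p y1 = d x1 y1 := h1.2 p
  have hsymm : d x1 p = d p x1 := hd.2.2.1 x1 p
  exact ⟨he, by linarith, by linarith⟩

lemma tentN_ne_coneN (x : X) :
    vert (fun y => -(tent d x1 p y)) ≠ vert (coneN d x) := by
  intro h
  obtain ⟨he, heD, hy1⟩ := tent_facts hd hpq h1 hp1 hpy hq1
  have H := vert_eq_imp h
  have H1 := H x1 x
  simp only [coneN] at H1
  rw [tent_at_x1 hd, hd.1] at H1
  -- H1 : -0 - -(tent x) = -(d x x1) - -0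
  have hTx : tent d x1 p x = 0 ∧ d x x1 = 0 := by
    have h1' : 0 ≤ tent d x1 p x := abs_nonneg _
    have h2' : 0 ≤ d x x1 := dnn hd x x1
    constructor <;> linarith
  have hxx1 : x = x1 := dzero hd hTx.2
  have H2 := H x1 y1
  simp only [coneN] at H2
  rw [tent_at_x1 hd] at H2
  have hdxy1 : d x y1 = d x1 y1 := by rw [hxx1]
  have hTy1 : tent d x1 p y1 = d x1 y1 := by linarith [hTx.2]
  simp only [tent] at hTy1
  rw [hy1] at hTy1
  rcases abs_cases (d x1 y1 - d p x1 - d p x1) with ⟨ha, _⟩ | ⟨ha, _⟩ <;> rw [ha] at hTy1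
  · linarith
  · have hpy1 : d p y1 = 0 := by linarith
    exact hpy (dzero hd hpy1)

lemma tentP_ne_coneN (x : X) :
    vert (tent d x1 p) ≠ vert (coneN d x) := by
  intro h
  obtain ⟨he, heD, hy1⟩ := tent_facts hd hpq h1 hp1 hpy hq1
  have H := vert_eq_imp h
  have HA := H x1 x
  have HB := H p x1
  have HC := H q x1
  simp only [coneN] at HA HB HC
  rw [tent_at_x1 hd, hd.1] at HA
  rw [tent_at_p hd, tent_at_x1 hd] at HB
  rw [tent_at_q hd hpq, tent_at_x1 hd] at HC
  have hMx : d p x + d x q = d p q := hpq.2 x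
  have hs1 : d x p = d p x := hd.2.2.1 x p
  have hxx1 : d x x1 = d p q := by linarith
  have hxp : d x p = d p q - d p x1 := by linarith
  have hTx : tent d x1 p x = d p q := by linarith
  simp only [tent] at hTx
  rw [hs1.symm, hxp] at hTx
  rcases abs_cases (d p q - d p x1 - d p x1) with ⟨ha, _⟩ | ⟨ha, _⟩ <;> rw [ha] at hTx <;>
    linarith

lemma tentN_ne_coneP (x : X) :
    vert (fun y => -(tent d x1 p y)) ≠ vert (coneP d x) := by
  intro h
  obtain ⟨he, heD, hy1⟩ := tent_facts hd hpq h1 hp1 hpy hq1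
  have H := vert_eq_imp h
  have HA := H p x1
  have HB := H q x1
  have HC := H x x1
  simp only [coneP] at HA HB HC
  rw [tent_at_p hd, tent_at_x1 hd] at HA
  rw [tent_at_q hd hpq, tent_at_x1 hd] at HB
  rw [hd.1] at HC
  rw [tent_at_x1 hd] at HC
  have hMx : d p x + d x q = d p q := hpq.2 x
  have hs1 : d x p = d p x := hd.2.2.1 x p
  have hxx1 : d x x1 = d p q := by linarith
  have hxp : d x p = d p q - d p x1 := by linarith
  have hTx : tent d x1 p x = d p q := by linarith
  simp only [tent] at hTx
  rw [hs1.symm, hxp] at hTx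
  rcases abs_cases (d p q - d p x1 - d p x1) with ⟨ha, _⟩ | ⟨ha, _⟩ <;> rw [ha] at hTx <;>
    linarith

lemma tentP_ne_coneP (x : X) :
    vert (tent d x1 p) ≠ vert (coneP d x) := by
  intro h
  obtain ⟨he, heD, hy1⟩ := tent_facts hd hpq h1 hp1 hpy hq1
  have H := vert_eq_imp h
  have HA := H x x1
  simp only [coneP] at HA
  rw [tent_at_x1 hd, hd.1] at HA
  have hTx : tent d x1 p x = 0 ∧ d x x1 = 0 := by
    have h1' : 0 ≤ tent d x1 p x := abs_nonneg _
    have h2' : 0 ≤ d x x1 := dnn hd x x1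
    constructor <;> linarith
  have hxx1 : x = x1 := dzero hd hTx.2
  have H2 := H y1 x1
  simp only [coneP] at H2
  rw [tent_at_x1 hd] at H2
  have hdxy1 : d x y1 = d x1 y1 := by rw [hxx1]
  have hTy1 : tent d x1 p y1 = d x1 y1 := by linarith [hTx.2]
  simp only [tent] at hTy1
  rw [hy1] at hTy1
  rcases abs_cases (d x1 y1 - d p x1 - d p x1) with ⟨ha, _⟩ | ⟨ha, _⟩ <;> rw [ha] at hTy1
  · linarith
  · have hpy1 : d p y1 = 0 := by linarith
    exact hpy (dzero hd hpy1)

end TentCone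

end Distinct

section TentTent
variable [Fintype X] [Nonempty X]

lemma tentN_ne_tentP (hd : IsMetric d) {p p' x1 : X} (hp1 : p ≠ x1) :
    vert (fun y => -(tent d x1 p y)) ≠ vert (tent d x1 p') := by
  intro h
  have H := vert_eq_imp h p x1
  rw [tent_at_x1 hd, tent_at_x1 hd, tent_at_p hd] at H
  have he : 0 < d p x1 := hd.2.1 p x1 hp1
  have h2 : 0 ≤ tent d x1 p' p := abs_nonneg _
  linarith

lemma tent_tent_core (hd : IsMetric d) {p q p' q' x1 : X}
    (hpq : Matched d p q) (hpq' : Matched d p' q')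
    (hp1 : p ≠ x1) (hp'1 : p' ≠ x1) (hpp' : p ≠ p') (hpq'ne : p ≠ q')
    (H : ∀ a b, tent d x1 p a - tent d x1 p b = tent d x1 p' a - tent d x1 p' b) :
    False := by
  have he : 0 < d p x1 := hd.2.1 p x1 hp1
  have he' : 0 < d p' x1 := hd.2.1 p' x1 hp'1
  have hA : 0 < d p p' := hd.2.1 p p' hpp'
  have hB : 0 < d p q' := hd.2.1 p q' hpq'ne
  have hqeq : d p' p + d p q' = d p' q' := hpq'.2 p
  have hsym : d p' p = d p p' := hd.2.2.1 p' p
  have Hi := H p' x1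
  rw [tent_at_x1 hd, tent_at_x1 hd, tent_at_p hd] at Hi
  -- Hi : tent d x1 p p' - 0 = d p' x1 - 0
  have Hi' := H p x1
  rw [tent_at_x1 hd, tent_at_x1 hd, tent_at_p hd] at Hi'
  have Hii := H q' x1
  rw [tent_at_x1 hd, tent_at_x1 hd, tent_at_q hd hpq'] at Hii
  simp only [tent] at Hi Hi' Hii
  rw [hsym] at Hi'
  rcases abs_cases (d p p' - d p x1) with ⟨ha1, _⟩ | ⟨ha1, _⟩ <;> rw [ha1] at Hi <;>
  rcases abs_cases (d p p' - d p' x1) with ⟨ha2, _⟩ | ⟨ha2, _⟩ <;> rw [ha2] at Hi' <;>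
  rcases abs_cases (d p q' - d p x1) with ⟨ha3, _⟩ | ⟨ha3, _⟩ <;> rw [ha3] at Hii <;>
    linarith

lemma tentP_ne_tentP (hd : IsMetric d) {p q p' q' x1 : X}
    (hpq : Matched d p q) (hpq' : Matched d p' q')
    (hp1 : p ≠ x1) (hp'1 : p' ≠ x1) (hpp' : p ≠ p') (hpq'ne : p ≠ q') :
    vert (tent d x1 p) ≠ vert (tent d x1 p') := by
  intro h
  exact tent_tent_core hd hpq hpq' hp1 hp'1 hpp' hpq'ne (fun a b => vert_eq_imp h a b)

lemma tentN_ne_tentN (hd : IsMetric d) {p q p' q' x1 : X}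
    (hpq : Matched d p q) (hpq' : Matched d p' q')
    (hp1 : p ≠ x1) (hp'1 : p' ≠ x1) (hpp' : p ≠ p') (hpq'ne : p ≠ q') :
    vert (fun y => -(tent d x1 p y)) ≠ vert (fun y => -(tent d x1 p' y)) := by
  intro h
  refine tent_tent_core hd hpq hpq' hp1 hp'1 hpp' hpq'ne (fun a b => ?_)
  have := vert_eq_imp h a b
  linarith

end TentTent

lemma assemble {X : Type} [Fintype X] {d : X → X → ℝ} {m : ℕ} {Γ : Type} [Fintype Γ]
    (g : Γ → (X → ℝ)) (hc : m ≤ Fintype.card Γ) (hg : Function.Injective g)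
    (hext : ∀ γ, g γ ∈ Set.extremePoints ℝ (Kd d)) :
    ∃ f : Fin m → (X → ℝ), Function.Injective f ∧
      ∀ i, f i ∈ Set.extremePoints ℝ (Kd d) := by
  refine ⟨g ∘ (Fintype.equivFin Γ).symm ∘ Fin.castLE hc, ?_, fun i => hext _⟩
  exact hg.comp ((Fintype.equivFin Γ).symm.injective.comp (Fin.castLE_injective hc))

end KdAux

open KdAux in
/-- For `|X| = n > 2`, the polytope of `d`-private distributions on `X` has
at least `2(n − 1)` extreme points. -/
theorem Kd_extremePoints_card_lower_bound
    {X : Type} [Fintype X] (hcard : 2 < Fintype.card X)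
    (d : X → X → ℝ) (hd : IsMetric d) :
    ∃ f : Fin (2 * (Fintype.card X - 1)) → (X → ℝ),
      Function.Injective f ∧
      ∀ i, f i ∈ Set.extremePoints ℝ (Kd d) := by
  classical
  have hne : Nonempty X := by
    rw [← Fintype.card_pos_iff]; omega
  by_cases hB : ∃ x y : X, Matched d x y
  · obtain ⟨x1, y1, hM1⟩ := hB
    set μ : X → X := fun z => if h : ∃ y, Matched d z y then h.choose else z with hμdef
    have hμ : ∀ z, (∃ y, Matched d z y) → Matched d z (μ z) := by
      intro z hz
      simp only [hμdef, dif_pos hz]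
      exact hz.choose_spec
    set B : Finset X := Finset.univ.filter (fun x => ∃ y, Matched d x y) with hBdef
    set B' : Finset X := (B.erase x1).erase y1 with hB'def
    set C : Finset X := Finset.univ \ B with hCdef
    have hx1B : x1 ∈ B := by
      rw [hBdef, Finset.mem_filter]
      exact ⟨Finset.mem_univ _, ⟨y1, hM1⟩⟩
    have hy1B : y1 ∈ B := by
      rw [hBdef, Finset.mem_filter]
      exact ⟨Finset.mem_univ _, ⟨x1, matched_symm hd hM1⟩⟩
    have hfacts : ∀ z ∈ B', Matched d z (μ z) ∧ μ z ≠ x1 ∧ z ≠ x1 ∧ z ≠ y1 := by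
      intro z hz
      rw [hB'def, Finset.mem_erase, Finset.mem_erase] at hz
      obtain ⟨hzy, hz1, hzB⟩ := hz
      rw [hBdef, Finset.mem_filter] at hzB
      have hzM : Matched d z (μ z) := hμ z hzB.2
      refine ⟨hzM, ?_, hz1, hzy⟩
      intro heq
      have h2 : Matched d x1 z := matched_symm hd (heq ▸ hzM)
      exact hzy (matched_unique hd h2 hM1 ▸ rfl)
    -- the tent associated to an element of B'
    set tentOf : X → (X → ℝ) := fun z =>
      if (Fintype.equivFin X) z < (Fintype.equivFin X) (μ z)
      then vert (tent d x1 z) else vert (fun y => -(tent d x1 z y)) with htentOf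
    have key1 : ∀ z ∈ B', ∀ x : X, tentOf z ≠ vert (coneN d x) := by
      intro z hz x
      obtain ⟨hzM, hμz1, hz1, hzy⟩ := hfacts z hz
      simp only [htentOf]
      split_ifs
      · exact tentP_ne_coneN hd hzM hM1 hz1 hzy hμz1 x
      · exact tentN_ne_coneN hd hzM hM1 hz1 hzy hμz1 x
    have key2 : ∀ z ∈ B', ∀ x : X, tentOf z ≠ vert (coneP d x) := by
      intro z hz x
      obtain ⟨hzM, hμz1, hz1, hzy⟩ := hfacts z hz
      simp only [htentOf]
      split_ifs
      · exact tentP_ne_coneP hd hzM hM1 hz1 hzy hμz1 x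
      · exact tentN_ne_coneP hd hzM hM1 hz1 hzy hμz1 x
    have key3 : ∀ z ∈ B', ∀ z' ∈ B', tentOf z = tentOf z' → z = z' := by
      intro z hz z' hz' heq
      by_contra hne'
      obtain ⟨hzM, hμz1, hz1, hzy⟩ := hfacts z hz
      obtain ⟨hz'M, hμz'1, hz'1, hz'y⟩ := hfacts z' hz'
      have hpart : z = μ z' → μ z = z' := by
        intro he
        have h2 : Matched d z z' := matched_symm hd (he ▸ hz'M)
        exact matched_unique hd hzM h2
      simp only [htentOf] at heq
      split_ifs at heq with c1 c2 c2
      · -- both +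
        have hzq' : z ≠ μ z' := by
          intro he
          have h3 := hpart he
          rw [h3] at c1
          rw [← he] at c2
          exact absurd c2 (lt_asymm c1)
        exact tentP_ne_tentP hd hzM hz'M hz1 hz'1 hne' hzq' heq
      · -- z + , z' -
        exact tentN_ne_tentP hd hz'1 heq.symm
      · -- z - , z' +
        exact tentN_ne_tentP hd hz1 heq
      · -- both -
        have hzq' : z ≠ μ z' := by
          intro he
          have h3 := hpart he
          rw [h3] at c1
          rw [← he] at c2
          have : (Fintype.equivFin X) z = (Fintype.equivFin X) z' :=
            le_antisymm (not_lt.mp c2) (not_lt.mp c1)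
          exact hne' ((Fintype.equivFin X).injective this)
        exact tentN_ne_tentN hd hzM hz'M hz1 hz'1 hne' hzq' heq
    have hCnoM : ∀ x : X, x ∈ C → ¬∃ y, Matched d x y := by
      intro x hx
      rw [hCdef, Finset.mem_sdiff, hBdef, Finset.mem_filter] at hx
      exact fun hex => hx.2 ⟨Finset.mem_univ _, hex⟩
    refine assemble
      (Sum.elim (fun x : X => vert (coneN d x))
        (Sum.elim (fun c : {x // x ∈ C} => vert (coneP d c.1))
          (fun b : {x // x ∈ B'} => tentOf b.1))) ?_ ?_ ?_
    · -- cardinality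
      have h2B : 2 ≤ B.card := by
        have : 1 < B.card := Finset.one_lt_card.mpr ⟨x1, hx1B, y1, hy1B, hM1.1⟩
        omega
      have hBle : B.card ≤ Fintype.card X := by
        have := Finset.card_le_card (Finset.subset_univ B)
        simpa using this
      have hCcard : C.card = Fintype.card X - B.card := by
        rw [hCdef, Finset.card_sdiff_of_subset (Finset.subset_univ B), Finset.card_univ]
      have hB'card : B'.card = B.card - 2 := by
        rw [hB'def, Finset.card_erase_of_mem, Finset.card_erase_of_mem hx1B]
        · omega
        · exact Finset.mem_erase.mpr ⟨fun h => hM1.1 h.symm, hy1B⟩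
      rw [Fintype.card_sum, Fintype.card_sum, Fintype.card_coe, Fintype.card_coe,
        hCcard, hB'card]
      omega
    · -- injectivity
      rintro (x | c | b) (x' | c' | b') hab <;>
        simp only [Sum.elim_inl, Sum.elim_inr] at hab
      · exact congrArg _ (coneN_inj hd hab)
      · exfalso
        refine coneN_ne_coneP hd (by omega) ?_ hab
        exact (hCnoM c'.1 c'.2)
      · exact absurd hab.symm (key1 b'.1 b'.2 x)
      · exfalso
        refine coneN_ne_coneP hd (by omega) ?_ hab.symm
        exact (hCnoM c.1 c.2)
      · have hcc : c = c' := Subtype.ext (coneP_inj hd hab)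
        rw [hcc]
      · exact absurd hab.symm (key2 b'.1 b'.2 c.1)
      · exact absurd hab (key1 b.1 b.2 x')
      · exact absurd hab (key2 b.1 b.2 c'.1)
      · have hbb : b = b' := Subtype.ext (key3 b.1 b.2 b'.1 b'.2 hab)
        rw [hbb]
    · -- extremeness
      rintro (x | c | b)
      · exact coneN_extreme hd x
      · exact coneP_extreme hd c.1
      · obtain ⟨hzM, _, _, _⟩ := hfacts b.1 b.2
        simp only [Sum.elim_inr, htentOf]
        split_ifs
        · exact tentP_extreme hd x1 hzM
        · exact tentN_extreme hd x1 hzM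
  · -- no matched pair at all
    refine assemble
      (Sum.elim (fun x : X => vert (coneN d x)) (fun x : X => vert (coneP d x)))
      ?_ ?_ ?_
    · rw [Fintype.card_sum]; omega
    · rintro (x | x) (x' | x') hab <;>
        simp only [Sum.elim_inl, Sum.elim_inr] at hab
      · exact congrArg _ (coneN_inj hd hab)
      · exact absurd hab (coneN_ne_coneP hd (by omega)
          (fun ⟨y', hy'⟩ => hB ⟨x', y', hy'⟩))
      · exact absurd hab.symm (coneN_ne_coneP hd (by omega)
          (fun ⟨y', hy'⟩ => hB ⟨x, y', hy'⟩))
      · exact congrArg _ (coneP_inj hd hab)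
    · rintro (x | x)
      · exact coneN_extreme hd x
      · exact coneP_extreme hd x
end
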